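/- arXiv:2201.09519 — 8 statements merged into one kernel-verified Lean document; each statement's English description precedes it below -/
import Mathlib

section
/- Let (k,δ) be a differential field and let A = (α,β)_{k,ω} be a symbol algebra of degree m with generators u, v. Let d be any derivation on A extending δ. Write d(u) = Σ_{0≤i,j≤m−1} a_{ij} u^i v^j and d(v) = Σ_{0≤i,j≤m−1} b_{ij} u^i v^j in the basis (u^i v^j) of A. Then a_{10} = δ(α)/(m·α) and a_{i0} = 0 for all i ≠ 1, and b_{01} = δ(β)/(m·β) and b_{0j} = 0 for all j ≠ 1. -/
lemma vu_pow_pow {k : Type*} [CommRing k] {A : Type*} [Ring A] [Algebra k A]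
    {ω : k} {u v : A} (hvu : v * u = ω • (u * v)) :
    ∀ i j : ℕ, v ^ j * u ^ i = ω ^ (j * i) • (u ^ i * v ^ j) := by
  have h1 : ∀ j : ℕ, v ^ j * u = ω ^ j • (u * v ^ j) := by
    intro j
    induction j with
    | zero => simp
    | succ n ih =>
      calc v ^ (n + 1) * u = v ^ n * (v * u) := by rw [pow_succ, mul_assoc]
        _ = v ^ n * (ω • (u * v)) := by rw [hvu]
        _ = ω • (v ^ n * u * v) := by rw [mul_smul_comm, mul_assoc]
        _ = ω • ((ω ^ n • (u * v ^ n)) * v) := by rw [ih]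
        _ = ω ^ (n + 1) • (u * v ^ (n + 1)) := by
            rw [smul_mul_assoc, smul_smul, ← pow_succ', mul_assoc, ← pow_succ]
  intro i j
  induction i with
  | zero => simp
  | succ n ih =>
    calc v ^ j * u ^ (n + 1) = (v ^ j * u ^ n) * u := by rw [pow_succ, ← mul_assoc]
      _ = ω ^ (j * n) • (u ^ n * v ^ j * u) := by rw [ih, smul_mul_assoc]
      _ = ω ^ (j * n) • (u ^ n * (ω ^ j • (u * v ^ j))) := by rw [mul_assoc, h1]
      _ = ω ^ (j * (n + 1)) • (u ^ (n + 1) * v ^ j) := by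
          rw [mul_smul_comm, smul_smul, ← pow_add, Nat.mul_succ, ← mul_assoc, ← pow_succ]

lemma symbolAlgebra_aux
    {k : Type*} [Field k] {m : ℕ} (hm : 2 ≤ m) (hchar : (m : k) ≠ 0)
    {ω : k} (hω : IsPrimitiveRoot ω m)
    {α : k} (hα : α ≠ 0)
    {A : Type*} [Ring A] [Algebra k A]
    (u v : A)
    (hu : u ^ m = algebraMap k A α)
    (hvu : v * u = ω • (u * v))
    (b : Module.Basis (Fin m × Fin m) k A)
    (hb : ∀ p : Fin m × Fin m, b p = u ^ (p.1 : ℕ) * v ^ (p.2 : ℕ))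
    (δ : k → k) (d : A → A)
    (hda : ∀ x y : A, d (x + y) = d x + d y)
    (hdm : ∀ x y : A, d (x * y) = x * d y + d x * y)
    (hdk : ∀ c : k, d (algebraMap k A c) = algebraMap k A (δ c)) :
    (b.repr (d u) (⟨1, Nat.lt_of_lt_of_le Nat.one_lt_two hm⟩, ⟨0, Nat.lt_of_lt_of_le Nat.two_pos hm⟩) = δ α / ((m : k) * α)) ∧
    (∀ i : Fin m, (i : ℕ) ≠ 1 → b.repr (d u) (i, ⟨0, Nat.lt_of_lt_of_le Nat.two_pos hm⟩) = 0) := by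
  haveI : NeZero m := ⟨by omega⟩
  have hval1 : ((1 : Fin m) : ℕ) = 1 := by
    rw [Fin.val_one']
    exact Nat.mod_eq_of_lt (by omega)
  -- derivation basics
  have d1 : d (1 : A) = 0 := by
    have h := hdm 1 1
    rw [one_mul, mul_one, one_mul] at h
    have h2 : d (1 : A) + 0 = d 1 + d 1 := by rw [add_zero, ← h]
    exact (add_left_cancel h2).symm
  -- d of powers
  have dpow : ∀ n : ℕ, d (u ^ n) = ∑ t ∈ Finset.range n, u ^ t * d u * u ^ (n - 1 - t) := by
    intro n
    induction n with
    | zero => simp [d1]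
    | succ n ih =>
      rw [pow_succ, hdm, ih, Finset.sum_mul, Finset.sum_range_succ]
      have h1 : ∀ t ∈ Finset.range n,
          (u ^ t * d u * u ^ (n - 1 - t)) * u = u ^ t * d u * u ^ (n + 1 - 1 - t) := by
        intro t ht
        rw [mul_assoc, ← pow_succ]
        have : n - 1 - t + 1 = n + 1 - 1 - t := by
          have := Finset.mem_range.mp ht; omega
        rw [this]
      rw [Finset.sum_congr rfl h1]
      have h2 : n + 1 - 1 - n = 0 := by omega
      rw [h2, pow_zero, mul_one, add_comm]
  -- geometric sums
  have hgeom : ∀ j : Fin m,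
      (∑ t ∈ Finset.range m, ω ^ ((j : ℕ) * t)) = if (j : ℕ) = 0 then (m : k) else 0 := by
    intro j
    by_cases hj : (j : ℕ) = 0
    · simp [hj]
    · rw [if_neg hj]
      have hne : ω ^ (j : ℕ) ≠ 1 := hω.pow_ne_one_of_pos_of_lt hj j.isLt
      calc ∑ t ∈ Finset.range m, ω ^ ((j : ℕ) * t)
          = ∑ t ∈ Finset.range m, (ω ^ (j : ℕ)) ^ t := by
            refine Finset.sum_congr rfl fun t _ => ?_
            rw [← pow_mul]
        _ = ((ω ^ (j : ℕ)) ^ m - 1) / (ω ^ (j : ℕ) - 1) := geom_sum_eq hne m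
        _ = 0 := by
            rw [← pow_mul, mul_comm, pow_mul, hω.pow_eq_one, one_pow, sub_self, zero_div]
  -- the permutation p ↦ (p.1 - 1, p.2)
  let τ : Fin m × Fin m ≃ Fin m × Fin m :=
    { toFun := fun p => (p.1 - 1, p.2)
      invFun := fun p => (p.1 + 1, p.2)
      left_inv := fun p => by simp
      right_inv := fun p => by simp }
  let e : Fin m × Fin m → k := fun p =>
    b.repr (d u) p * (if (p.2 : ℕ) = 0 then (m : k) else 0) * (if (p.1 : ℕ) = 0 then 1 else α)
  have hsub : ∀ i : Fin m, ((i - 1 : Fin m) : ℕ) = if (i : ℕ) = 0 then m - 1 else (i : ℕ) - 1 := by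
    intro i
    have h1 : ((i - 1 : Fin m) : ℕ) = ((m - ((1 : Fin m) : ℕ)) + (i : ℕ)) % m := by
      rw [Fin.sub_def]
    rw [h1, hval1]
    rcases Nat.eq_zero_or_pos (i : ℕ) with h | h
    · rw [if_pos h, h, add_zero, Nat.mod_eq_of_lt (by omega)]
    · rw [if_neg (by omega)]
      have h2 : (m - 1) + (i : ℕ) = ((i : ℕ) - 1) + m := by omega
      rw [h2, Nat.add_mod_right, Nat.mod_eq_of_lt (by have := i.isLt; omega)]
  -- u^(m-1+i) * v^j in terms of the basis
  have hBT : ∀ p : Fin m × Fin m,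
      u ^ (m - 1 + (p.1 : ℕ)) * v ^ (p.2 : ℕ)
        = (if (p.1 : ℕ) = 0 then (1 : k) else α) • b (τ p) := by
    intro p
    have hτ1 : ((τ p).1 : ℕ) = ((p.1 - 1 : Fin m) : ℕ) := rfl
    have hτ2 : (τ p).2 = p.2 := rfl
    rw [hb, hτ2, hτ1, hsub]
    by_cases hp : (p.1 : ℕ) = 0
    · rw [if_pos hp, if_pos hp, one_smul, hp, add_zero]
    · rw [if_neg hp, if_neg hp]
      have h1 : m - 1 + (p.1 : ℕ) = ((p.1 : ℕ) - 1) + m := by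
        have := p.1.isLt; omega
      rw [h1, pow_add, hu, Algebra.algebraMap_eq_smul_one, mul_smul_comm, mul_one,
        smul_mul_assoc]
  -- the key computation
  have hS : (∑ t ∈ Finset.range m, u ^ t * d u * u ^ (m - 1 - t))
      = ∑ p : Fin m × Fin m, e p • b (τ p) := by
    calc ∑ t ∈ Finset.range m, u ^ t * d u * u ^ (m - 1 - t)
        = ∑ t ∈ Finset.range m, ∑ p : Fin m × Fin m,
            b.repr (d u) p • (u ^ t * b p * u ^ (m - 1 - t)) := by
          refine Finset.sum_congr rfl fun t _ => ?_
          conv_lhs => rw [← b.sum_repr (d u)]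
          rw [Finset.mul_sum, Finset.sum_mul]
          exact Finset.sum_congr rfl fun p _ => by rw [mul_smul_comm, smul_mul_assoc]
      _ = ∑ p : Fin m × Fin m, ∑ t ∈ Finset.range m,
            b.repr (d u) p • (u ^ t * b p * u ^ (m - 1 - t)) := Finset.sum_comm
      _ = ∑ p : Fin m × Fin m, e p • b (τ p) := by
          refine Finset.sum_congr rfl fun p _ => ?_
          have hterm : ∀ t ∈ Finset.range m,
              b.repr (d u) p • (u ^ t * b p * u ^ (m - 1 - t))
                = (b.repr (d u) p * ω ^ ((p.2 : ℕ) * (m - 1 - t))) •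
                    (u ^ (m - 1 + (p.1 : ℕ)) * v ^ (p.2 : ℕ)) := by
            intro t ht
            have hx : u ^ t * b p * u ^ (m - 1 - t)
                = ω ^ ((p.2 : ℕ) * (m - 1 - t)) • (u ^ (m - 1 + (p.1 : ℕ)) * v ^ (p.2 : ℕ)) := by
              rw [hb]
              calc u ^ t * (u ^ (p.1 : ℕ) * v ^ (p.2 : ℕ)) * u ^ (m - 1 - t)
                  = u ^ (t + (p.1 : ℕ)) * (v ^ (p.2 : ℕ) * u ^ (m - 1 - t)) := by
                    rw [← mul_assoc, ← mul_assoc, ← pow_add, mul_assoc]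
                _ = u ^ (t + (p.1 : ℕ)) *
                    (ω ^ ((p.2 : ℕ) * (m - 1 - t)) • (u ^ (m - 1 - t) * v ^ (p.2 : ℕ))) := by
                    rw [vu_pow_pow hvu]
                _ = ω ^ ((p.2 : ℕ) * (m - 1 - t)) •
                    (u ^ (t + (p.1 : ℕ) + (m - 1 - t)) * v ^ (p.2 : ℕ)) := by
                    rw [mul_smul_comm, ← mul_assoc, ← pow_add]
                _ = ω ^ ((p.2 : ℕ) * (m - 1 - t)) •
                    (u ^ (m - 1 + (p.1 : ℕ)) * v ^ (p.2 : ℕ)) := by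
                    have ht' := Finset.mem_range.mp ht
                    have : t + (p.1 : ℕ) + (m - 1 - t) = m - 1 + (p.1 : ℕ) := by omega
                    rw [this]
            rw [hx, smul_smul]
          rw [Finset.sum_congr rfl hterm, ← Finset.sum_smul, ← Finset.mul_sum]
          have hrefl : (∑ t ∈ Finset.range m, ω ^ ((p.2 : ℕ) * (m - 1 - t)))
              = ∑ t ∈ Finset.range m, ω ^ ((p.2 : ℕ) * t) :=
            Finset.sum_range_reflect (fun t => ω ^ ((p.2 : ℕ) * t)) m
          rw [hrefl, hgeom, hBT, smul_smul]
  -- identify coefficients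
  have hrepr : ∀ q : Fin m × Fin m,
      b.repr (∑ p : Fin m × Fin m, e p • b (τ p)) q = e (τ.symm q) := by
    intro q
    have h1 : (∑ p : Fin m × Fin m, e p • b (τ p))
        = ∑ p : Fin m × Fin m, e (τ.symm p) • b p := by
      rw [← Equiv.sum_comp τ (fun p => e (τ.symm p) • b p)]
      simp
    rw [h1]
    exact congrFun (b.repr_sum_self (fun p => e (τ.symm p))) q
  have hfinal : ∀ q : Fin m × Fin m,
      e (τ.symm q) = if ((0 : Fin m), (0 : Fin m)) = q then δ α else 0 := by
    intro q
    have h1 : d (u ^ m) = algebraMap k A (δ α) := by rw [hu, hdk]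
    have h3 : algebraMap k A (δ α) = (δ α) • b ((0 : Fin m), (0 : Fin m)) := by
      rw [hb]
      simp [Algebra.algebraMap_eq_smul_one]
    calc e (τ.symm q) = b.repr (∑ p : Fin m × Fin m, e p • b (τ p)) q := (hrepr q).symm
      _ = b.repr ((δ α) • b ((0 : Fin m), (0 : Fin m))) q := by
          rw [← hS, ← dpow m, h1, h3]
      _ = if ((0 : Fin m), (0 : Fin m)) = q then δ α else 0 := by
          rw [map_smul, Module.Basis.repr_self, Finsupp.smul_apply, Finsupp.single_apply]
          split_ifs <;> simp
  have hzero : (⟨0, by omega⟩ : Fin m) = 0 := Fin.ext (by simp)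
  constructor
  · -- the coefficient a₁₀
    have hq := hfinal ((0 : Fin m), (0 : Fin m))
    have hτ : τ.symm ((0 : Fin m), (0 : Fin m)) = ((1 : Fin m), (0 : Fin m)) := by
      simp [τ]
    rw [hτ, if_pos rfl] at hq
    have he : e ((1 : Fin m), (0 : Fin m))
        = b.repr (d u) ((1 : Fin m), (0 : Fin m)) * (m : k) * α := by
      simp only [e]
      rw [if_pos (by simp), if_neg (by rw [hval1]; omega)]
    have hone : (⟨1, by omega⟩ : Fin m) = 1 := Fin.ext (by rw [hval1])
    rw [hone, hzero, eq_div_iff (mul_ne_zero hchar hα), ← mul_assoc]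
    rw [he] at hq
    exact hq
  · intro i hi
    have hq := hfinal ((i - 1 : Fin m), (0 : Fin m))
    have hτ : τ.symm ((i - 1 : Fin m), (0 : Fin m)) = (i, (0 : Fin m)) := by
      simp [τ]
    have hne : ¬ (((0 : Fin m), (0 : Fin m)) = ((i - 1 : Fin m), (0 : Fin m))) := by
      intro h
      have h1 : (0 : Fin m) = i - 1 := congrArg Prod.fst h
      have h2 : i = 1 := by
        have := sub_eq_zero.mp h1.symm
        exact this
      apply hi
      rw [h2, hval1]
    rw [hτ, if_neg hne] at hq
    simp only [e] at hq
    rw [if_pos (by simp)] at hq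
    rw [hzero]
    by_cases h0 : (i : ℕ) = 0
    · rw [if_pos h0, mul_one] at hq
      exact (mul_eq_zero.mp hq).resolve_right hchar
    · rw [if_neg h0] at hq
      rcases mul_eq_zero.mp hq with h | h
      · exact (mul_eq_zero.mp h).resolve_right hchar
      · exact absurd h hα

/-- Coordinates of `d u` and `d v` for any derivation `d` on a symbol
algebra `A = (α,β)_{k,ω}` extending a derivation `δ` on `k`. -/
theorem symbolAlgebra_derivation_coords
    {k : Type*} [Field k] {m : ℕ} (hm : 2 ≤ m) (hchar : (m : k) ≠ 0)
    {ω : k} (hω : IsPrimitiveRoot ω m)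
    {α β : k} (hα : α ≠ 0) (hβ : β ≠ 0)
    {A : Type*} [Ring A] [Algebra k A]
    (u v : A)
    (hu : u ^ m = algebraMap k A α)
    (hv : v ^ m = algebraMap k A β)
    (hvu : v * u = ω • (u * v))
    (b : Module.Basis (Fin m × Fin m) k A)
    (hb : ∀ p : Fin m × Fin m, b p = u ^ (p.1 : ℕ) * v ^ (p.2 : ℕ))
    (δ : k → k)
    (hδa : ∀ x y : k, δ (x + y) = δ x + δ y)
    (hδm : ∀ x y : k, δ (x * y) = x * δ y + δ x * y)
    (d : A → A)
    (hda : ∀ x y : A, d (x + y) = d x + d y)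
    (hdm : ∀ x y : A, d (x * y) = x * d y + d x * y)
    (hdk : ∀ c : k, d (algebraMap k A c) = algebraMap k A (δ c)) :
    (b.repr (d u) (⟨1, by omega⟩, ⟨0, by omega⟩) = δ α / ((m : k) * α)) ∧
    (∀ i : Fin m, (i : ℕ) ≠ 1 → b.repr (d u) (i, ⟨0, by omega⟩) = 0) ∧
    (b.repr (d v) (⟨0, by omega⟩, ⟨1, by omega⟩) = δ β / ((m : k) * β)) ∧
    (∀ j : Fin m, (j : ℕ) ≠ 1 → b.repr (d v) (⟨0, by omega⟩, j) = 0) := by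
  obtain ⟨hu1, hu2⟩ := symbolAlgebra_aux hm hchar hω hα u v hu hvu b hb δ d hda hdm hdk
  -- set up the swapped basis for the `v` part
  have hω0 : ω ≠ 0 := by
    intro h
    have h1 := hω.pow_eq_one
    rw [h, zero_pow (by omega : m ≠ 0)] at h1
    exact zero_ne_one h1
  have hvu' : u * v = ω⁻¹ • (v * u) := by
    rw [hvu, smul_smul, inv_mul_cancel₀ hω0, one_smul]
  let w : Fin m × Fin m → kˣ := fun p => (Units.mk0 ω hω0) ^ ((p.2 : ℕ) * (p.1 : ℕ))
  let b' : Module.Basis (Fin m × Fin m) k A :=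
    (b.reindex (Equiv.prodComm (Fin m) (Fin m))).unitsSMul w
  have hb' : ∀ p : Fin m × Fin m, b' p = v ^ (p.1 : ℕ) * u ^ (p.2 : ℕ) := by
    intro p
    rw [Module.Basis.unitsSMul_apply, Module.Basis.reindex_apply]
    have hsymm : (Equiv.prodComm (Fin m) (Fin m)).symm p = (p.2, p.1) := rfl
    rw [hsymm, hb]
    rw [vu_pow_pow hvu (p.2 : ℕ) (p.1 : ℕ)]
    have hwv : (w p : k) = ω ^ ((p.2 : ℕ) * (p.1 : ℕ)) := by
      simp [w]
    rw [Units.smul_def, hwv, mul_comm (p.2 : ℕ) (p.1 : ℕ)]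
  obtain ⟨hv1, hv2⟩ := symbolAlgebra_aux hm hchar hω.inv hβ v u hv hvu' b' hb' δ d hda hdm hdk
  have htrans : ∀ (x : A) (j : Fin m),
      b'.repr x (j, (⟨0, by omega⟩ : Fin m)) = b.repr x ((⟨0, by omega⟩ : Fin m), j) := by
    intro x j
    have h1 : b'.repr x (j, (⟨0, by omega⟩ : Fin m))
        = (w (j, ⟨0, by omega⟩))⁻¹ • (b.reindex (Equiv.prodComm (Fin m) (Fin m))).repr x
            (j, ⟨0, by omega⟩) :=
      Module.Basis.repr_unitsSMul _ _ _ _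
    rw [h1, Module.Basis.repr_reindex_apply]
    have hw1 : w (j, (⟨0, by omega⟩ : Fin m)) = 1 := by
      simp [w]
    rw [hw1, inv_one, one_smul]
    rfl
  refine ⟨hu1, hu2, ?_, ?_⟩
  · rw [← htrans (d v) ⟨1, by omega⟩]
    exact hv1
  · intro j hj
    rw [← htrans (d v) j]
    exact hv2 j hj
end

section
/- Let (k,δ) be a differential field and let A = (α,β)_{k,ω} be a symbol algebra of degree m with generators u, v. Then there exists a derivation d_s on A extending δ such that d_s(u) = (δ(α)/(m·α))·u and d_s(v) = (δ(β)/(m·β))·v. -/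
/-- Existence of the standard derivation on a symbol algebra
`A = (α,β)_{k,ω}` extending a derivation `δ` on `k`. -/
theorem symbolAlgebra_exists_standardDerivation
    {k : Type*} [Field k] {m : ℕ} (hm : 2 ≤ m) (hchar : (m : k) ≠ 0)
    {ω : k} (hω : IsPrimitiveRoot ω m)
    {α β : k} (hα : α ≠ 0) (hβ : β ≠ 0)
    {A : Type*} [Ring A] [Algebra k A]
    (u v : A)
    (hu : u ^ m = algebraMap k A α)
    (hv : v ^ m = algebraMap k A β)
    (hvu : v * u = ω • (u * v))
    (b : Module.Basis (Fin m × Fin m) k A)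
    (hb : ∀ p : Fin m × Fin m, b p = u ^ (p.1 : ℕ) * v ^ (p.2 : ℕ))
    (δ : k → k)
    (hδa : ∀ x y : k, δ (x + y) = δ x + δ y)
    (hδm : ∀ x y : k, δ (x * y) = x * δ y + δ x * y) :
    ∃ d : A → A,
      (∀ x y : A, d (x + y) = d x + d y) ∧
      (∀ x y : A, d (x * y) = x * d y + d x * y) ∧
      (∀ c : k, d (algebraMap k A c) = algebraMap k A (δ c)) ∧
      d u = (δ α / ((m : k) * α)) • u ∧
      d v = (δ β / ((m : k) * β)) • v := by
  classical
  have hm0 : m ≠ 0 := by omega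
  have hmpos : 0 < m := by omega
  -- basic facts about δ
  have hδ0 : δ 0 = 0 := by
    have h := hδa 0 0; simp only [add_zero] at h
    exact (left_eq_add.mp h)
  have hδ1 : δ 1 = 0 := by
    have h := hδm 1 1; simp only [mul_one, one_mul] at h
    exact (left_eq_add.mp h)
  have hδpow0 : ∀ (x : k), δ x = 0 → ∀ n : ℕ, δ (x ^ n) = 0 := by
    intro x hx n
    induction n with
    | zero => simpa using hδ1
    | succ n ih => rw [pow_succ, hδm, ih, hx]; ring
  have hδω : δ ω = 0 := by
    have hω1 : ω ^ m = 1 := hω.pow_eq_one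
    have hωne : ω ≠ 0 := hω.ne_zero hm0
    have key : ∀ n : ℕ, δ (ω ^ (n + 1)) = ((n : k) + 1) * ω ^ n * δ ω := by
      intro n
      induction n with
      | zero => simp
      | succ n ih => rw [pow_succ, hδm, ih]; push_cast; ring
    have h1 : δ (ω ^ m) = 0 := by rw [hω1]; exact hδ1
    obtain ⟨n, rfl⟩ : ∃ n, m = n + 1 := ⟨m - 1, by omega⟩
    rw [key] at h1
    have h2 : ((n : k) + 1) * ω ^ n ≠ 0 := by
      apply mul_ne_zero _ (pow_ne_zero _ hωne)
      have h3 : ((n : k) + 1) = ((n + 1 : ℕ) : k) := by push_cast; ring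
      rw [h3]; exact hchar
    rcases mul_eq_zero.mp h1 with h | h
    · exact absurd h h2
    · exact h
  set a : k := δ α / ((m : k) * α) with ha_def
  set a' : k := δ β / ((m : k) * β) with ha'_def
  have hmα : (m : k) * α ≠ 0 := mul_ne_zero hchar hα
  have hmβ : (m : k) * β ≠ 0 := mul_ne_zero hchar hβ
  have hma : (m : k) * a * α = δ α := by
    rw [ha_def]; field_simp
  have hma' : (m : k) * a' * β = δ β := by
    rw [ha'_def]; field_simp
  -- coefficient function
  set c : Fin m × Fin m → k := fun p => ((p.1 : ℕ) : k) * a + ((p.2 : ℕ) : k) * a'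
    with hc_def
  -- the derivation
  set d : A → A := fun x => ∑ p : Fin m × Fin m,
      (δ (b.repr x p) + c p * b.repr x p) • b p with hd_def
  -- additivity
  have hd_add : ∀ x y : A, d (x + y) = d x + d y := by
    intro x y
    simp only [hd_def]
    rw [← Finset.sum_add_distrib]
    refine Finset.sum_congr rfl fun p _ => ?_
    rw [map_add, Finsupp.add_apply, hδa, ← add_smul]
    congr 1; ring
  have hd_zero : d 0 = 0 := by
    have h := hd_add 0 0
    simp only [add_zero] at h
    exact (left_eq_add.mp h)
  have hd_sum : ∀ (s : Finset (Fin m × Fin m)) (f : Fin m × Fin m → A),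
      d (∑ p ∈ s, f p) = ∑ p ∈ s, d (f p) := by
    intro s f
    induction s using Finset.induction with
    | empty => simpa using hd_zero
    | @insert q s hq ih =>
      rw [Finset.sum_insert hq, Finset.sum_insert hq, hd_add, ih]
  -- value on scalar multiples of basis vectors
  have hd_smul_basis : ∀ (r : k) (q : Fin m × Fin m),
      d (r • b q) = (δ r + c q * r) • b q := by
    intro r q
    simp only [hd_def, map_smul, b.repr_self]
    rw [Finset.sum_eq_single q]
    · simp
    · intro p _ hpq
      have h0 : (r • Finsupp.single q (1 : k)) p = 0 := by
        simp [Finsupp.single_apply, Ne.symm hpq]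
      rw [h0]
      simp [hδ0]
    · intro h; exact absurd (Finset.mem_univ q) h
  have hd_smul : ∀ (r : k) (x : A), d (r • x) = δ r • x + r • d x := by
    intro r x
    simp only [hd_def]
    calc (∑ p : Fin m × Fin m, (δ ((b.repr (r • x)) p) + c p * (b.repr (r • x)) p) • b p)
        = ∑ p : Fin m × Fin m, (δ r • (b.repr x p • b p)
            + r • ((δ (b.repr x p) + c p * b.repr x p) • b p)) := by
          refine Finset.sum_congr rfl fun p _ => ?_
          rw [map_smul, Finsupp.smul_apply, smul_eq_mul, hδm, smul_smul, smul_smul,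
            ← add_smul]
          congr 1; ring
      _ = δ r • x + r • ∑ p : Fin m × Fin m,
            (δ (b.repr x p) + c p * b.repr x p) • b p := by
          rw [Finset.sum_add_distrib, ← Finset.smul_sum, ← Finset.smul_sum, b.sum_repr]
  -- basis at (0,0) is 1
  set p00 : Fin m × Fin m := (⟨0, hmpos⟩, ⟨0, hmpos⟩) with hp00_def
  have hp00 : b p00 = 1 := by
    rw [hb]; simp [hp00_def]
  have hc00 : c p00 = 0 := by simp [hc_def, hp00_def]
  have hd_alg : ∀ c0 : k, d (algebraMap k A c0) = algebraMap k A (δ c0) := by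
    intro c0
    have h1 : algebraMap k A c0 = c0 • b p00 := by
      rw [hp00, Algebra.algebraMap_eq_smul_one]
    rw [h1, hd_smul_basis, hc00, hp00, Algebra.algebraMap_eq_smul_one,
      zero_mul, add_zero]
  -- generic right-multiplication Leibniz rule for a generator g
  have hgen : ∀ (g : A) (ag : k), d g = ag • g →
      (∀ p : Fin m × Fin m, ∃ (s : k) (p' : Fin m × Fin m),
        b p * g = s • b p' ∧ δ s = (c p + ag - c p') * s) →
      ∀ x : A, d (x * g) = x * d g + d x * g := by
    intro g ag hdg hmul x
    have key : ∀ p : Fin m × Fin m, ∀ r : k,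
        d ((r • b p) * g) = ag • ((r • b p) * g) + d (r • b p) * g := by
      intro p r
      obtain ⟨s, p', hbp, hδs⟩ := hmul p
      rw [smul_mul_assoc, hbp, smul_smul, hd_smul_basis, hd_smul_basis,
        smul_smul, smul_mul_assoc, hbp, smul_smul, ← add_smul]
      congr 1
      rw [hδm, hδs]
      ring
    calc d (x * g) = d ((∑ p : Fin m × Fin m, b.repr x p • b p) * g) := by
          rw [b.sum_repr]
      _ = ∑ p : Fin m × Fin m, d ((b.repr x p • b p) * g) := by
          rw [Finset.sum_mul, hd_sum]
      _ = ∑ p : Fin m × Fin m, (ag • ((b.repr x p • b p) * g)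
            + d (b.repr x p • b p) * g) := by
          refine Finset.sum_congr rfl fun p _ => key p _
      _ = x * d g + d x * g := by
          rw [Finset.sum_add_distrib, ← Finset.smul_sum, ← Finset.sum_mul,
            ← Finset.sum_mul, b.sum_repr, hdg, mul_smul_comm]
          congr 2
          conv_rhs => rw [← b.sum_repr x]
          rw [hd_sum]
  -- commutation of powers of v past u
  have hvju : ∀ j : ℕ, v ^ j * u = ω ^ j • (u * v ^ j) := by
    intro j
    induction j with
    | zero => simp
    | succ j ih =>
      rw [pow_succ, mul_assoc, hvu, mul_smul_comm, ← mul_assoc, ih, smul_mul_assoc,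
        smul_smul, mul_assoc, ← pow_succ]
      congr 1
      ring
  -- values on u and v
  have hdu : d u = a • u := by
    have hbu : b (⟨1, by omega⟩, ⟨0, hmpos⟩) = u := by rw [hb]; simp
    have h := hd_smul_basis 1 (⟨1, by omega⟩, ⟨0, hmpos⟩)
    rw [one_smul, hbu] at h
    rw [h, hδ1]
    have hc1 : c (⟨1, by omega⟩, ⟨0, hmpos⟩) = a := by simp [hc_def]
    rw [hc1, mul_one, zero_add]
  have hdv : d v = a' • v := by
    have hbv : b (⟨0, hmpos⟩, ⟨1, by omega⟩) = v := by rw [hb]; simp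
    have h := hd_smul_basis 1 (⟨0, hmpos⟩, ⟨1, by omega⟩)
    rw [one_smul, hbv] at h
    rw [h, hδ1]
    have hc1 : c (⟨0, hmpos⟩, ⟨1, by omega⟩) = a' := by simp [hc_def]
    rw [hc1, mul_one, zero_add]
  -- the shift witnesses for u
  have hwit_u : ∀ p : Fin m × Fin m, ∃ (s : k) (p' : Fin m × Fin m),
      b p * u = s • b p' ∧ δ s = (c p + a - c p') * s := by
    rintro ⟨i, j⟩
    have hcp : c (i, j) = ((i : ℕ) : k) * a + ((j : ℕ) : k) * a' := by simp [hc_def]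
    have hstep : b (i, j) * u = ω ^ (j : ℕ) • (u ^ ((i : ℕ) + 1) * v ^ (j : ℕ)) := by
      rw [hb]
      simp only
      rw [mul_assoc, hvju, mul_smul_comm, ← mul_assoc, ← pow_succ]
    by_cases hi : (i : ℕ) + 1 < m
    · refine ⟨ω ^ (j : ℕ), (⟨(i : ℕ) + 1, hi⟩, j), ?_, ?_⟩
      · rw [hstep, hb]
      · rw [hδpow0 ω hδω]
        have hcp' : c (⟨(i : ℕ) + 1, hi⟩, j)
            = (((i : ℕ) : k) + 1) * a + ((j : ℕ) : k) * a' := by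
          simp [hc_def]
        rw [hcp, hcp']
        ring
    · have him : (i : ℕ) + 1 = m := by
        have := i.isLt; omega
      have hb0 : b (⟨0, hmpos⟩, j) = v ^ (j : ℕ) := by rw [hb]; simp
      have hum : u ^ ((i : ℕ) + 1) = algebraMap k A α := by rw [him, hu]
      refine ⟨ω ^ (j : ℕ) * α, (⟨0, hmpos⟩, j), ?_, ?_⟩
      · rw [hstep, hum, hb0, ← Algebra.smul_def, smul_smul]
      · have hcp' : c (⟨0, hmpos⟩, j) = ((j : ℕ) : k) * a' := by simp [hc_def]
        have hicast : ((i : ℕ) : k) + 1 = (m : k) := by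
          exact_mod_cast congrArg (fun n : ℕ => (n : k)) him
        rw [hδm, hδpow0 ω hδω, hcp, hcp']
        linear_combination (- (ω ^ (j : ℕ))) * hma
          + (- (a * ω ^ (j : ℕ) * α)) * hicast
  -- the shift witnesses for v
  have hwit_v : ∀ p : Fin m × Fin m, ∃ (s : k) (p' : Fin m × Fin m),
      b p * v = s • b p' ∧ δ s = (c p + a' - c p') * s := by
    rintro ⟨i, j⟩
    have hcp : c (i, j) = ((i : ℕ) : k) * a + ((j : ℕ) : k) * a' := by simp [hc_def]
    have hstep : b (i, j) * v = u ^ (i : ℕ) * v ^ ((j : ℕ) + 1) := by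
      rw [hb]
      simp only
      rw [mul_assoc, ← pow_succ]
    by_cases hj : (j : ℕ) + 1 < m
    · refine ⟨1, (i, ⟨(j : ℕ) + 1, hj⟩), ?_, ?_⟩
      · rw [hstep, hb, one_smul]
      · have hcp' : c (i, ⟨(j : ℕ) + 1, hj⟩)
            = ((i : ℕ) : k) * a + (((j : ℕ) : k) + 1) * a' := by
          simp [hc_def]
        rw [hδ1, hcp, hcp']
        ring
    · have hjm : (j : ℕ) + 1 = m := by
        have := j.isLt; omega
      have hb0 : b (i, ⟨0, hmpos⟩) = u ^ (i : ℕ) := by rw [hb]; simp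
      have hvm : v ^ ((j : ℕ) + 1) = algebraMap k A β := by rw [hjm, hv]
      refine ⟨β, (i, ⟨0, hmpos⟩), ?_, ?_⟩
      · rw [hstep, hvm, hb0, Algebra.smul_def, Algebra.commutes]
      · have hcp' : c (i, ⟨0, hmpos⟩) = ((i : ℕ) : k) * a := by simp [hc_def]
        have hjcast : ((j : ℕ) : k) + 1 = (m : k) := by
          exact_mod_cast congrArg (fun n : ℕ => (n : k)) hjm
        rw [hcp, hcp']
        linear_combination (-1 : k) * hma' + (- (a' * β)) * hjcast
  have hLu : ∀ x : A, d (x * u) = x * d u + d x * u := hgen u a hdu hwit_u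
  have hLv : ∀ x : A, d (x * v) = x * d v + d x * v := hgen v a' hdv hwit_v
  have hLalg : ∀ (c0 : k) (x : A),
      d (x * algebraMap k A c0) = x * d (algebraMap k A c0) + d x * algebraMap k A c0 := by
    intro c0 x
    have h1 : x * algebraMap k A c0 = c0 • x := by
      rw [Algebra.smul_def, Algebra.commutes]
    have h2 : x * algebraMap k A (δ c0) = δ c0 • x := by
      rw [Algebra.smul_def, Algebra.commutes]
    have h3 : d x * algebraMap k A c0 = c0 • d x := by
      rw [Algebra.smul_def, Algebra.commutes]
    rw [hd_alg, h1, h2, h3, hd_smul]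
  have htop : (⊤ : Subalgebra k A) ≤ Algebra.adjoin k {u, v} := by
    intro x _
    rw [← b.sum_repr x]
    refine Subalgebra.sum_mem _ fun p _ => Subalgebra.smul_mem _ ?_ _
    rw [hb]
    exact mul_mem (pow_mem (Algebra.subset_adjoin (by simp)) _)
      (pow_mem (Algebra.subset_adjoin (by simp)) _)
  have hLeib : ∀ x y : A, d (x * y) = x * d y + d x * y := by
    intro x y
    have hy : y ∈ Algebra.adjoin k {u, v} := htop (Algebra.mem_top)
    refine Algebra.adjoin_induction
      (p := fun y _ => ∀ x : A, d (x * y) = x * d y + d x * y)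
      ?_ ?_ ?_ ?_ hy x
    · intro g hg
      simp only [Set.mem_insert_iff, Set.mem_singleton_iff] at hg
      rcases hg with rfl | rfl
      · exact hLu
      · exact hLv
    · intro r x
      exact hLalg r x
    · intro y z _ _ hy hz x
      rw [mul_add, hd_add, hy, hz, hd_add]
      noncomm_ring
    · intro y z _ _ hy hz x
      rw [← mul_assoc, hz, hy, hz]
      noncomm_ring
  exact ⟨d, hd_add, hLeib, hd_alg, hdu, hdv⟩
end

section
/- Let k be a field, δ a derivation on k, and A a finite-dimensional associative unital k-algebra. Let d : A → A be an additive map satisfying d(xy) = x·d(y) + d(x)·y for all x, y ∈ A and d(c•a) = δ(c)•a + c•d(a) for all c ∈ k and a ∈ A. For a ∈ A, let tr(a) ∈ k denote the trace of the k-linear endomorphism l_a : A → A, x ↦ a·x. Then tr(d(a)) = δ(tr(a)) for all a ∈ A. -/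
/-- For a finite-dimensional associative unital `k`-algebra `A` with a
derivation `d` compatible with a derivation `δ` on `k`, the trace of left multiplication is a
differential homomorphism: `tr(d a) = δ(tr a)`. -/
theorem trace_leftMul_derivation
    {k : Type*} [Field k] {A : Type*} [Ring A] [Algebra k A] [Module.Finite k A]
    (δ : k → k)
    (hδa : ∀ x y : k, δ (x + y) = δ x + δ y)
    (hδm : ∀ x y : k, δ (x * y) = x * δ y + δ x * y)
    (d : A → A)
    (hda : ∀ x y : A, d (x + y) = d x + d y)
    (hdm : ∀ x y : A, d (x * y) = x * d y + d x * y)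
    (hds : ∀ (c : k) (a : A), d (c • a) = δ c • a + c • d a) :
    ∀ a : A,
      LinearMap.trace k A (LinearMap.mulLeft k (d a))
        = δ (LinearMap.trace k A (LinearMap.mulLeft k a)) := by
  intro a
  classical
  let dh : A →+ A := AddMonoidHom.mk' d hda
  let δh : k →+ k := AddMonoidHom.mk' δ hδa
  let b := Module.finBasis k A
  set n := Module.finrank k A with hn
  let C : Fin n → Fin n → k := fun i j => b.repr (a * b j) i
  let U : Fin n → Fin n → k := fun i j => b.repr (d (b j)) i
  have hC : ∀ j, a * b j = ∑ i, C i j • b i := fun j => (b.sum_repr (a * b j)).symm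
  have hU : ∀ j, d (b j) = ∑ i, U i j • b i := fun j => (b.sum_repr (d (b j))).symm
  have key : ∀ j, d a * b j
      = (∑ i, δ (C i j) • b i) + ((∑ i, C i j • d (b i)) - a * d (b j)) := by
    intro j
    have h1 : d (a * b j) = a * d (b j) + d a * b j := hdm a (b j)
    have h2 : d (a * b j) = (∑ i, δ (C i j) • b i) + (∑ i, C i j • d (b i)) := by
      conv_lhs => rw [hC j]
      rw [show d (∑ i, C i j • b i) = ∑ i, d (C i j • b i) from map_sum dh _ _]
      rw [← Finset.sum_add_distrib]
      exact Finset.sum_congr rfl fun i _ => hds (C i j) (b i)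
    rw [h2] at h1
    rw [← add_sub_assoc]
    exact eq_sub_of_add_eq (by rw [add_comm]; exact h1.symm)
  have trace_eq : ∀ x : A, LinearMap.trace k A (LinearMap.mulLeft k x)
      = ∑ j, b.repr (x * b j) j := by
    intro x
    rw [LinearMap.trace_eq_matrix_trace k b]
    simp [Matrix.trace, Matrix.diag, LinearMap.toMatrix_apply]
  rw [trace_eq, trace_eq]
  have hterm : ∀ j, (b.repr (d a * b j)) j
      = δ (C j j) + ((∑ i, C i j * U j i) - (∑ m, U m j * C j m)) := by
    intro j
    rw [key j]
    have e1 : (b.repr (∑ i, δ (C i j) • b i)) j = δ (C j j) := by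
      simp [map_sum, Finsupp.finset_sum_apply, Finsupp.single_apply,
        Finset.sum_ite_eq]
    have e2 : (b.repr (∑ i, C i j • d (b i))) j = ∑ i, C i j * U j i := by
      simp [map_sum, Finsupp.finset_sum_apply, U]
    have e3 : (b.repr (a * d (b j))) j = ∑ m, U m j * C j m := by
      conv_lhs => rw [hU j]
      rw [Finset.mul_sum]
      simp only [mul_smul_comm]
      simp [map_sum, Finsupp.finset_sum_apply, C]
    rw [map_add, map_sub, Finsupp.add_apply, Finsupp.sub_apply, e1, e2, e3]
  rw [Finset.sum_congr rfl fun j _ => hterm j]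
  rw [Finset.sum_add_distrib, Finset.sum_sub_distrib]
  have hcancel : (∑ j, ∑ i, C i j * U j i) = ∑ j, ∑ m, U m j * C j m := by
    rw [Finset.sum_comm]
    exact Finset.sum_congr rfl fun i _ => Finset.sum_congr rfl fun j _ => mul_comm _ _
  rw [hcancel, sub_self, add_zero]
  exact (map_sum δh (fun j => C j j) Finset.univ).symm
end

section
/- Let (k,δ) be a differential field and let A = (α,β)_{k,ω} be a symbol algebra of degree m with generators u, v. Assume the polynomial X^m − α is irreducible over k, and let E = k[X]/(X^m − α) be the degree-m field extension of k generated by an m-th root ξ of α. Let d be a derivation on A extending δ such that d maps the subalgebra k(u) generated by u into itself. Let θ ∈ A with d(θ) = 0, write θ = Σ_{0≤i,j≤m−1} θ_{ij} u^i v^j in the basis of A, and suppose that for some p with 1 ≤ p ≤ m−1 the element θ_p := Σ_{0≤i≤m−1} θ_{ip} u^i of k(u) is nonzero. Then there exist a nonzero c ∈ k with δ(c) = 0 and an element γ ∈ E such that the field norm N_{E/k}(γ) equals c·β^p. -/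
open Polynomial

namespace SD10

variable {R : Type*}

theorem dzero [Ring R] (D : R → R) (hadd : ∀ x y, D (x + y) = D x + D y) : D 0 = 0 := by
  have := hadd 0 0
  rw [add_zero] at this
  simpa using this

theorem done [Ring R] (D : R → R) (hadd : ∀ x y, D (x + y) = D x + D y)
    (hmul : ∀ x y, D (x * y) = x * D y + D x * y) : D 1 = 0 := by
  have h := hmul 1 1
  rw [mul_one, one_mul, mul_one] at h
  have h2 : D 1 + D 1 = D 1 + 0 := by rw [add_zero]; exact h.symm
  exact (add_left_cancel h2)

theorem dsum [Ring R] (D : R → R) (hadd : ∀ x y, D (x + y) = D x + D y)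
    {ι : Type*} (s : Finset ι) (F : ι → R) :
    D (∑ i ∈ s, F i) = ∑ i ∈ s, D (F i) := by
  classical
  induction s using Finset.induction_on with
  | empty => simpa using dzero D hadd
  | insert a s hx ih => rw [Finset.sum_insert hx, Finset.sum_insert hx, hadd, ih]

theorem dpow [CommRing R] (D : R → R) (hadd : ∀ x y, D (x + y) = D x + D y)
    (hmul : ∀ x y, D (x * y) = x * D y + D x * y) (x : R) :
    ∀ n : ℕ, D (x ^ (n + 1)) = (n + 1) • (x ^ n * D x) := by
  intro n
  induction n with
  | zero => simp
  | succ n ih =>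
      have h1 : x ^ (n + 2) = x ^ (n + 1) * x := by ring
      rw [h1, hmul, ih, pow_succ]
      simp only [nsmul_eq_mul]
      push_cast
      ring

theorem dprod [CommRing R] (D : R → R) (hadd : ∀ x y, D (x + y) = D x + D y)
    (hmul : ∀ x y, D (x * y) = x * D y + D x * y)
    {ι : Type*} [DecidableEq ι] (s : Finset ι) (F : ι → R) :
    D (∏ i ∈ s, F i) = ∑ i ∈ s, D (F i) * ∏ j ∈ s.erase i, F j := by
  induction s using Finset.induction_on with
  | empty => simpa using done D hadd hmul
  | insert a s hx ih =>
      rw [Finset.prod_insert hx, hmul, ih, Finset.sum_insert hx, Finset.erase_insert hx,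
        Finset.mul_sum]
      rw [add_comm]
      congr 1
      refine Finset.sum_congr rfl fun i hi => ?_
      have hne : i ≠ a := by rintro rfl; exact hx hi
      rw [Finset.erase_insert_of_ne hne.symm, Finset.prod_insert (fun h => hx (Finset.mem_of_mem_erase h))]
      ring

end SD10

theorem adjoinRoot_ext {k : Type*} [CommRing k] (f : k[X]) (D₁ D₂ : AdjoinRoot f → AdjoinRoot f)
    (hadd₁ : ∀ x y, D₁ (x + y) = D₁ x + D₁ y)
    (hmul₁ : ∀ x y, D₁ (x * y) = x * D₁ y + D₁ x * y)
    (hadd₂ : ∀ x y, D₂ (x + y) = D₂ x + D₂ y)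
    (hmul₂ : ∀ x y, D₂ (x * y) = x * D₂ y + D₂ x * y)
    (hC : ∀ c : k, D₁ (algebraMap k _ c) = D₂ (algebraMap k _ c))
    (hroot : D₁ (AdjoinRoot.root f) = D₂ (AdjoinRoot.root f)) (x : AdjoinRoot f) :
    D₁ x = D₂ x := by
  refine AdjoinRoot.induction_on f x ?_
  intro g
  induction g using Polynomial.induction_on with
  | C a => simpa [AdjoinRoot.mk_C] using hC a
  | add p q hp hq => rw [map_add, hadd₁, hadd₂, hp, hq]
  | monomial n a hn =>
      have h1 : (AdjoinRoot.mk f) (C a * X ^ (n + 1))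
          = (AdjoinRoot.mk f) (C a * X ^ n) * AdjoinRoot.root f := by
        rw [pow_succ, ← mul_assoc, map_mul, AdjoinRoot.mk_X]
      rw [h1, hmul₁, hmul₂, hn, hroot]


set_option maxHeartbeats 1600000 in
/-- Let `d` be a derivation on the symbol algebra `A = (α,β)_{k,ω}`
extending `δ` and preserving `k(u)`. If `θ ∈ A` is a constant of `d` whose component
`θ_p = Σ_i θ_{ip} u^i ∈ k(u)` is nonzero for some `1 ≤ p ≤ m−1`, then there is a nonzero
constant `c ∈ k` such that `c·β^p` is a norm from `E = k[X]/(X^m − α)`; i.e. the symbol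
algebra `(α, c·β^p)` splits over `k`. -/
theorem symbolAlgebra_constant_gives_norm
    {k : Type*} [Field k] {m : ℕ} (hm : 2 ≤ m) (hchar : (m : k) ≠ 0)
    {ω : k} (hω : IsPrimitiveRoot ω m)
    {α β : k} (hα : α ≠ 0) (hβ : β ≠ 0)
    {A : Type*} [Ring A] [Algebra k A]
    (u v : A)
    (hu : u ^ m = algebraMap k A α)
    (hv : v ^ m = algebraMap k A β)
    (hvu : v * u = ω • (u * v))
    (b : Module.Basis (Fin m × Fin m) k A)
    (hb : ∀ p : Fin m × Fin m, b p = u ^ (p.1 : ℕ) * v ^ (p.2 : ℕ))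
    (hirr : Irreducible (Polynomial.X ^ m - Polynomial.C α : Polynomial k))
    (δ : k → k)
    (hδa : ∀ x y : k, δ (x + y) = δ x + δ y)
    (hδm : ∀ x y : k, δ (x * y) = x * δ y + δ x * y)
    (d : A → A)
    (hda : ∀ x y : A, d (x + y) = d x + d y)
    (hdm : ∀ x y : A, d (x * y) = x * d y + d x * y)
    (hdk : ∀ c : k, d (algebraMap k A c) = algebraMap k A (δ c))
    (hdu : ∀ x ∈ Algebra.adjoin k ({u} : Set A), d x ∈ Algebra.adjoin k ({u} : Set A))
    (θ : A) (hθ : d θ = 0)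
    (p : Fin m) (hp : 1 ≤ (p : ℕ))
    (hθp : (∑ i : Fin m, b.repr θ (i, p) • u ^ (i : ℕ)) ≠ 0) :
    ∃ c : k, c ≠ 0 ∧ δ c = 0 ∧
      ∃ γ : AdjoinRoot (Polynomial.X ^ m - Polynomial.C α : Polynomial k),
        Algebra.norm k γ = c * β ^ (p : ℕ) := by
  classical
  haveI : NeZero m := ⟨by omega⟩
  have hm1 : 1 < m := hm
  have hprim : (primitiveRoots m k).Nonempty :=
    ⟨ω, (mem_primitiveRoots (by omega)).mpr hω⟩
  haveI hFact : Fact (Irreducible (Polynomial.X ^ m - Polynomial.C α : Polynomial k)) := ⟨hirr⟩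
  haveI hsplit : Polynomial.IsSplittingField k
      (AdjoinRoot (Polynomial.X ^ m - Polynomial.C α : Polynomial k))
      (Polynomial.X ^ m - Polynomial.C α) :=
    isSplittingField_AdjoinRoot_X_pow_sub_C hprim hirr
  haveI : FiniteDimensional k (AdjoinRoot (Polynomial.X ^ m - Polynomial.C α : Polynomial k)) :=
    Polynomial.IsSplittingField.finiteDimensional _ (Polynomial.X ^ m - Polynomial.C α : Polynomial k)
  haveI : IsGalois k (AdjoinRoot (Polynomial.X ^ m - Polynomial.C α : Polynomial k)) :=
    isGalois_of_isSplittingField_X_pow_sub_C hprim hirr _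
  -- abbreviations
  set E : Type _ := AdjoinRoot (Polynomial.X ^ m - Polynomial.C α : Polynomial k) with hE
  set ρ : E := AdjoinRoot.root (Polynomial.X ^ m - Polynomial.C α : Polynomial k) with hρdef
  have hρ : ρ ^ m = algebraMap k E α := by
    rw [hρdef, root_X_pow_sub_C_pow, AdjoinRoot.algebraMap_eq]
  have hρ0 : ρ ≠ 0 := root_X_pow_sub_C_ne_zero hm1 α
  -- the embedding φ : E →ₐ[k] A
  have haev : (Polynomial.aeval u) (Polynomial.X ^ m - Polynomial.C α : Polynomial k) = 0 := by
    rw [map_sub, Polynomial.aeval_X_pow, Polynomial.aeval_C, hu, sub_self]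
  have hker : ∀ a ∈ Ideal.span {(Polynomial.X ^ m - Polynomial.C α : Polynomial k)},
      (Polynomial.aeval u).toRingHom a = 0 := by
    intro a ha
    obtain ⟨c, rfl⟩ := Ideal.mem_span_singleton'.mp ha
    simp only [AlgHom.toRingHom_eq_coe, RingHom.coe_coe, map_mul, haev, mul_zero]
  set φ : E →ₐ[k] A :=
    { toRingHom := Ideal.Quotient.lift _ (Polynomial.aeval u).toRingHom hker,
      commutes' := fun c => by
        show Ideal.Quotient.lift _ _ hker (algebraMap k E c) = algebraMap k A c
        rw [AdjoinRoot.algebraMap_eq]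
        show Ideal.Quotient.lift _ _ hker
          (AdjoinRoot.mk (Polynomial.X ^ m - Polynomial.C α) (Polynomial.C c))
          = algebraMap k A c
        rw [show AdjoinRoot.mk (Polynomial.X ^ m - Polynomial.C α) (Polynomial.C c)
            = Ideal.Quotient.mk _ (Polynomial.C c) from rfl, Ideal.Quotient.lift_mk]
        simp } with hφdef
  have hφmk : ∀ g : Polynomial k,
      φ (AdjoinRoot.mk (Polynomial.X ^ m - Polynomial.C α) g) = Polynomial.aeval u g :=
    fun g => rfl
  have hφroot : φ ρ = u := by
    rw [hρdef, show AdjoinRoot.root (Polynomial.X ^ m - Polynomial.C α : Polynomial k)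
      = AdjoinRoot.mk _ Polynomial.X from rfl, hφmk, Polynomial.aeval_X]
  haveI : Nontrivial A := nontrivial_of_ne (b ⟨0, 0⟩) 0 (b.ne_zero _)
  have hφinj : Function.Injective φ := RingHom.injective (φ.toRingHom : E →+* A)
  have hkEinj : Function.Injective (algebraMap k E) := RingHom.injective _
  -- range of φ
  have hmemφ : ∀ y : E, φ y ∈ Algebra.adjoin k ({u} : Set A) := by
    intro y
    refine AdjoinRoot.induction_on _ y fun g => ?_
    rw [hφmk, Algebra.adjoin_singleton_eq_range_aeval]
    exact (AlgHom.mem_range _).mpr ⟨g, rfl⟩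
  have hrange : ∀ x ∈ Algebra.adjoin k ({u} : Set A), ∃ y : E, φ y = x := by
    intro x hx
    rw [Algebra.adjoin_singleton_eq_range_aeval] at hx
    obtain ⟨g, hg⟩ := (AlgHom.mem_range _).mp hx
    exact ⟨AdjoinRoot.mk _ g, by rw [hφmk]; exact hg⟩
  have humem : u ∈ Algebra.adjoin k ({u} : Set A) := Algebra.subset_adjoin rfl
  -- the induced derivation D on E
  choose Df hDf using hrange
  set D : E → E := fun y => Df (d (φ y)) (hdu _ (hmemφ y)) with hDdef
  have hDφ : ∀ y, φ (D y) = d (φ y) := fun y => hDf _ _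
  have hDadd : ∀ x y, D (x + y) = D x + D y := by
    intro x y; apply hφinj
    rw [map_add, hDφ, hDφ, hDφ, map_add, hda]
  have hDmul : ∀ x y, D (x * y) = x * D y + D x * y := by
    intro x y; apply hφinj
    rw [map_add, map_mul, map_mul, hDφ, hDφ, hDφ, map_mul, hdm]
  have hDk : ∀ c : k, D (algebraMap k E c) = algebraMap k E (δ c) := by
    intro c; apply hφinj
    rw [hDφ, AlgHom.commutes, AlgHom.commutes, hdk]
  -- basic facts about d and δ
  have hd1 : d 1 = 0 := SD10.done d hda hdm
  have hδ1 : δ 1 = 0 := SD10.done δ hδa hδm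
  have hδω : δ ω = 0 := by
    have h := SD10.dpow δ hδa hδm ω (m - 1)
    rw [(by omega : m - 1 + 1 = m), hω.pow_eq_one, hδ1, nsmul_eq_mul] at h
    have h2 := h.symm
    rcases mul_eq_zero.mp h2 with h' | h'
    · exact absurd (by exact_mod_cast h') hchar
    · rcases mul_eq_zero.mp h' with h'' | h''
      · exact absurd h'' (pow_ne_zero _ (hω.ne_zero (by omega)))
      · exact h''
  have hdωA : d (algebraMap k A ω) = 0 := by rw [hdk, hδω, map_zero]
  -- the decomposition map Ψ
  set Ψfun : (Fin m → E) → A := fun g => ∑ j : Fin m, φ (g j) * v ^ (j : ℕ) with hΨfun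
  have hΨadd : ∀ g g', Ψfun (g + g') = Ψfun g + Ψfun g' := by
    intro g g'
    simp only [hΨfun, Pi.add_apply, map_add, add_mul, Finset.sum_add_distrib]
  have hΨsmul : ∀ (c : k) (g : Fin m → E), Ψfun (c • g) = c • Ψfun g := by
    intro c g
    simp only [hΨfun, Pi.smul_apply, map_smul, smul_mul_assoc, Finset.smul_sum]
  set Ψ : (Fin m → E) →ₗ[k] A :=
    { toFun := Ψfun, map_add' := hΨadd, map_smul' := hΨsmul } with hΨdef
  set coords : A → (Fin m → E) := fun x j => ∑ i : Fin m, b.repr x (i, j) • ρ ^ (i : ℕ)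
    with hcoords
  have hΨcoords : ∀ x : A, Ψfun (coords x) = x := by
    intro x
    calc Ψfun (coords x)
        = ∑ j : Fin m, ∑ i : Fin m, b.repr x (i, j) • (u ^ (i : ℕ) * v ^ (j : ℕ)) := by
          simp only [hΨfun, hcoords, map_sum, map_smul, map_pow, hφroot, Finset.sum_mul,
            smul_mul_assoc]
      _ = ∑ j : Fin m, ∑ i : Fin m, b.repr x (i, j) • b (i, j) := by
          refine Finset.sum_congr rfl fun j _ => Finset.sum_congr rfl fun i _ => ?_
          simp [hb]
      _ = ∑ q : Fin m × Fin m, b.repr x q • b q := by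
          rw [Fintype.sum_prod_type, Finset.sum_comm]
      _ = x := b.sum_repr x
  haveI : FiniteDimensional k A := Module.Finite.of_basis b
  have hrkE : Module.finrank k E = m := finrank_of_isSplittingField_X_pow_sub_C hprim hirr _
  have hrk : Module.finrank k (Fin m → E) = Module.finrank k A := by
    rw [Module.finrank_pi_fintype, Module.finrank_eq_card_basis b]
    simp [hrkE, Finset.sum_const, Fintype.card_prod, Fintype.card_fin]
  have hΨsurj : Function.Surjective Ψ := fun x => ⟨coords x, hΨcoords x⟩
  have hΨinj : Function.Injective Ψfun :=
    (LinearMap.injective_iff_surjective_of_finrank_eq_finrank hrk).mpr hΨsurj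
  -- Galois theory of E
  set eμ := autEquivZmod hirr E hω with heμ
  set σg : E ≃ₐ[k] E := eμ.symm (Multiplicative.ofAdd ((1 : ℕ) : ZMod m)) with hσgdef
  have hσroot : σg ρ = ω • ρ := by
    have h := autEquivZmod_symm_apply_natCast hirr E hρ hω 1
    rw [pow_one] at h
    exact h
  have hσpowroot : ∀ i : ℕ, (σg ^ i) ρ = (ω ^ i) • ρ := by
    intro i; induction i with
    | zero => simp
    | succ n ih =>
        rw [pow_succ, AlgEquiv.mul_apply, hσroot, map_smul, ih, smul_smul, pow_succ, mul_comm]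
  -- commutation of v with φ-images
  have hcomm1 : ∀ y : E, v * φ y = φ (σg y) * v := by
    intro y
    refine AdjoinRoot.induction_on _ y fun g => ?_
    induction g using Polynomial.induction_on with
    | C a =>
        rw [AdjoinRoot.mk_C, ← AdjoinRoot.algebraMap_eq, AlgEquiv.commutes, AlgHom.commutes]
        exact (Algebra.commutes a v).symm
    | add q r hq hr =>
        simp only [map_add, mul_add, add_mul, hq, hr]
    | monomial n a hn =>
        have h1 : (AdjoinRoot.mk (Polynomial.X ^ m - Polynomial.C α))
            (Polynomial.C a * Polynomial.X ^ (n + 1))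
            = (AdjoinRoot.mk (Polynomial.X ^ m - Polynomial.C α))
              (Polynomial.C a * Polynomial.X ^ n) * ρ := by
          rw [hρdef, pow_succ, ← mul_assoc, map_mul, AdjoinRoot.mk_X]
        rw [h1, map_mul σg, hσroot, map_mul φ, map_mul φ, hφroot, map_smul φ, hφroot,
          ← mul_assoc, hn, mul_assoc, hvu, mul_smul_comm, mul_smul_comm, smul_mul_assoc,
          mul_assoc]
  have hcommj : ∀ (j : ℕ) (y : E), v ^ j * φ y = φ ((σg ^ j) y) * v ^ j := by
    intro j
    induction j with
    | zero => intro y; simp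
    | succ n ih =>
        intro y
        rw [pow_succ, mul_assoc, hcomm1 y, ← mul_assoc, ih (σg y), mul_assoc, pow_succ,
          AlgEquiv.mul_apply]
  have hmulΨ : ∀ (y : E) (g : Fin m → E), φ y * Ψfun g = Ψfun (fun j => y * g j) := by
    intro y g
    simp only [hΨfun, Finset.mul_sum, map_mul, mul_assoc]
  have hsingle : ∀ (t : Fin m) (y : E), φ y * v ^ (t : ℕ) = Ψfun (Pi.single t y) := by
    intro t y
    symm
    simp only [hΨfun]
    rw [Finset.sum_eq_single t]
    · rw [Pi.single_eq_same]
    · intro j _ hj; rw [Pi.single_eq_of_ne hj, map_zero, zero_mul]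
    · intro h; exact absurd (Finset.mem_univ t) h
  have hval1 : ((1 : Fin m) : ℕ) = 1 := by
    rw [Fin.val_one']; exact Nat.mod_eq_of_lt hm1
  -- d v has only the v-degree-1 component
  set W : Fin m → E := coords (d v) with hWdef
  have hdvΨ : d v = Ψfun W := (hΨcoords (d v)).symm
  set g₀ : E := Df (d u) (hdu u humem) with hg₀def
  have hg₀ : φ g₀ = d u := hDf _ _
  have hrel : v * d u + d v * u
      = algebraMap k A ω * (u * d v) + algebraMap k A ω * (d u * v) := by
    have h1 : d (v * u) = v * d u + d v * u := hdm v u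
    have h2 : d (v * u) = algebraMap k A ω * (u * d v) + algebraMap k A ω * (d u * v) := by
      rw [hvu, Algebra.smul_def, hdm, hdωA, hdm]
      simp [mul_add]
    rw [← h1, h2]
  have hLHS : v * d u + d v * u
      = Ψfun (fun j => (Pi.single (1 : Fin m) (σg g₀) : Fin m → E) j + W j * ((ω ^ (j : ℕ)) • ρ)) := by
    have e1 : v * d u = Ψfun (Pi.single (1 : Fin m) (σg g₀)) := by
      rw [← hg₀, hcomm1, ← hsingle 1 (σg g₀), hval1, pow_one]
    have e2 : d v * u = Ψfun (fun j => W j * ((ω ^ (j : ℕ)) • ρ)) := by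
      rw [hdvΨ]
      simp only [hΨfun, Finset.sum_mul]
      refine Finset.sum_congr rfl fun j _ => ?_
      rw [mul_assoc, ← hφroot, hcommj, hσpowroot, ← mul_assoc, ← map_mul]
    rw [e1, e2, ← hΨadd]
    rfl
  have hRHS : algebraMap k A ω * (u * d v) + algebraMap k A ω * (d u * v)
      = Ψfun (fun j => ω • (ρ * W j) + (Pi.single (1 : Fin m) (ω • g₀) : Fin m → E) j) := by
    have e3 : algebraMap k A ω * (u * d v) = Ψfun (fun j => ω • (ρ * W j)) := by
      rw [hdvΨ, ← hφroot, hmulΨ, ← Algebra.smul_def, ← hΨsmul]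
      rfl
    have e4 : algebraMap k A ω * (d u * v) = Ψfun (Pi.single (1 : Fin m) (ω • g₀)) := by
      rw [← hg₀, ← pow_one v, ← hval1, hsingle, ← Algebra.smul_def, ← hΨsmul]
      congr 1
      funext j
      by_cases hj : j = 1
      · subst hj; simp
      · simp [Pi.single_eq_of_ne hj]
    rw [e3, e4, ← hΨadd]
    rfl
  have hWj : ∀ j : Fin m, j ≠ 1 → W j = 0 := by
    intro j hj
    have heq : (fun j => (Pi.single (1 : Fin m) (σg g₀) : Fin m → E) j + W j * ((ω ^ (j : ℕ)) • ρ))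
        = (fun j => ω • (ρ * W j) + (Pi.single (1 : Fin m) (ω • g₀) : Fin m → E) j) :=
      hΨinj (by rw [← hLHS, ← hRHS]; exact hrel)
    have hfun := congrFun heq j
    rw [Pi.single_eq_of_ne hj, Pi.single_eq_of_ne hj, zero_add, add_zero] at hfun
    have h2 : (ω ^ (j : ℕ)) • (W j * ρ) = ω • (W j * ρ) := by
      rw [mul_smul_comm, mul_comm ρ (W j)] at hfun
      exact hfun
    have h3 : ((ω ^ (j : ℕ)) - ω) • (W j * ρ) = 0 := by rw [sub_smul, h2, sub_self]
    rcases smul_eq_zero.mp h3 with h4 | h4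
    · exfalso
      apply hj
      have h5 : ω ^ (j : ℕ) = ω ^ 1 := by rw [pow_one]; rwa [sub_eq_zero] at h4
      have h6 := hω.pow_inj j.isLt hm1 h5
      exact Fin.ext (by rw [hval1]; exact h6)
    · rcases mul_eq_zero.mp h4 with h5 | h5
      · exact h5
      · exact absurd h5 hρ0
  set w : E := W 1 with hwdef
  have hWsingle : W = Pi.single (1 : Fin m) w := by
    funext j
    by_cases hj : j = 1
    · subst hj; rw [Pi.single_eq_same]
    · rw [hWj j hj, Pi.single_eq_of_ne hj]
  have hdv : d v = φ w * v := by
    rw [hdvΨ, hWsingle, ← hsingle, hval1, pow_one]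
  -- d (v^n)
  set T : ℕ → E := fun n => ∑ i ∈ Finset.range n, (σg ^ i) w with hTdef
  have hdvn : ∀ n : ℕ, d (v ^ n) = φ (T n) * v ^ n := by
    intro n
    induction n with
    | zero => simp [hTdef, pow_zero, hd1]
    | succ n ih =>
        rw [pow_succ, hdm, ih, hdv, ← mul_assoc, hcommj n w]
        simp only [hTdef, Finset.sum_range_succ, map_add, add_mul, pow_succ, mul_assoc]
        abel
  -- trace of w
  have hβE : algebraMap k E β ≠ 0 := fun h => hβ (hkEinj (by rw [h, map_zero]))
  have hTr : T m = algebraMap k E (δ β * β⁻¹) := by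
    have h1 : d (v ^ m) = algebraMap k A (δ β) := by rw [hv, hdk]
    rw [hdvn m, hv] at h1
    have h2 : φ (T m * algebraMap k E β) = φ (algebraMap k E (δ β)) := by
      rw [map_mul, AlgHom.commutes, AlgHom.commutes]; exact h1
    have h3 := hφinj h2
    rw [map_mul, map_inv₀, eq_mul_inv_iff_mul_eq₀ hβE]
    exact h3
  -- the component equation for θ
  set Y : Fin m → E := coords θ with hYdef
  have hθΨ : Ψfun Y = θ := hΨcoords θ
  have hYp : Y p ≠ 0 := by
    intro h0
    apply hθp
    have h1 : φ (Y p) = ∑ i : Fin m, b.repr θ (i, p) • u ^ (i : ℕ) := by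
      simp only [hYdef, hcoords, map_sum, map_smul, map_pow, hφroot]
    rw [← h1, h0, map_zero]
  have hcomp : ∀ j : Fin m, Y j * T (j : ℕ) + D (Y j) = 0 := by
    have h1 : d θ = Ψfun (fun j => Y j * T (j : ℕ) + D (Y j)) := by
      conv_lhs => rw [← hθΨ]
      simp only [hΨfun]
      rw [SD10.dsum d hda]
      refine Finset.sum_congr rfl fun j _ => ?_
      rw [hdm, hdvn, ← hDφ, map_add, map_mul, add_mul, ← mul_assoc]
    have h2 : Ψfun (fun j => Y j * T (j : ℕ) + D (Y j)) = Ψfun (fun _ => 0) := by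
      rw [← h1, hθ]
      symm
      simp [hΨfun]
    intro j
    exact congrFun (hΨinj h2) j
  have hDYp : D (Y p) = -(Y p * T (p : ℕ)) := eq_neg_of_add_eq_zero_right (hcomp p)
  -- D commutes with all automorphisms
  have hmE : ((m : ℕ) : E) ≠ 0 := by
    have h1 : ((m : ℕ) : E) = algebraMap k E ((m : ℕ) : k) := (map_natCast _ m).symm
    rw [h1]
    exact fun h => hchar (hkEinj (by rw [h, map_zero]))
  have hDunique : ∀ D' : E → E, (∀ x y, D' (x + y) = D' x + D' y) →
      (∀ x y, D' (x * y) = x * D' y + D' x * y) →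
      (∀ c : k, D' (algebraMap k E c) = algebraMap k E (δ c)) → ∀ x, D' x = D x := by
    intro D' h1 h2 h3
    have hroot : D' ρ = D ρ := by
      have e1 : ((m : ℕ) : E) * (ρ ^ (m - 1) * D' ρ) = algebraMap k E (δ α) := by
        have h4 := SD10.dpow D' h1 h2 ρ (m - 1)
        rw [(by omega : m - 1 + 1 = m), hρ, h3, nsmul_eq_mul] at h4
        exact h4.symm
      have e2 : ((m : ℕ) : E) * (ρ ^ (m - 1) * D ρ) = algebraMap k E (δ α) := by
        have h4 := SD10.dpow D hDadd hDmul ρ (m - 1)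
        rw [(by omega : m - 1 + 1 = m), hρ, hDk, nsmul_eq_mul] at h4
        exact h4.symm
      have h5 : ((m : ℕ) : E) * (ρ ^ (m - 1) * D' ρ) = ((m : ℕ) : E) * (ρ ^ (m - 1) * D ρ) := by
        rw [e1, e2]
      have h6 := mul_left_cancel₀ hmE h5
      exact mul_left_cancel₀ (pow_ne_zero _ hρ0) h6
    exact adjoinRoot_ext _ D' D h1 h2 hDadd hDmul (fun c => by rw [h3, hDk]) hroot
  have hDg : ∀ (g : E ≃ₐ[k] E) (x : E), D (g x) = g (D x) := by
    intro g x
    have ha : ∀ a c : E, g.symm (D (g (a + c))) = g.symm (D (g a)) + g.symm (D (g c)) :=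
      fun a c => by rw [map_add, hDadd, map_add]
    have hb : ∀ a c : E, g.symm (D (g (a * c))) = a * g.symm (D (g c)) + g.symm (D (g a)) * c :=
      fun a c => by
        rw [map_mul, hDmul, map_add, map_mul, map_mul, AlgEquiv.symm_apply_apply,
          AlgEquiv.symm_apply_apply]
    have hc : ∀ c : k, g.symm (D (g (algebraMap k E c))) = algebraMap k E (δ c) :=
      fun c => by rw [AlgEquiv.commutes, hDk, AlgEquiv.commutes]
    have h1 := hDunique (fun y => g.symm (D (g y))) ha hb hc x
    rw [← h1, AlgEquiv.apply_symm_apply]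
  -- norm computations
  have hγ0 : Y p ≠ 0 := hYp
  set N : k := Algebra.norm k (Y p) with hNdef
  have hN0 : N ≠ 0 := by
    rw [hNdef]
    exact Algebra.norm_ne_zero_iff.mpr hγ0
  have hNprod : algebraMap k E N = ∏ g : E ≃ₐ[k] E, g (Y p) :=
    Algebra.norm_eq_prod_automorphisms k (Y p)
  -- sum of w over the Galois group
  have hσt : ∀ t : ZMod m, eμ.symm (Multiplicative.ofAdd t) = σg ^ t.val := by
    intro t
    rw [hσgdef, ← map_pow, ← ofAdd_nsmul, nsmul_eq_mul, Nat.cast_one, mul_one,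
      ZMod.natCast_rightInverse t]
  have hS : ∑ g : E ≃ₐ[k] E, g w = algebraMap k E (δ β * β⁻¹) := by
    rw [← hTr, hTdef]
    calc ∑ g : E ≃ₐ[k] E, g w
        = ∑ t : ZMod m, (eμ.symm (Multiplicative.ofAdd t)) w := by
          refine (Fintype.sum_equiv (Multiplicative.ofAdd.trans eμ.symm.toEquiv)
            (fun t => (eμ.symm (Multiplicative.ofAdd t)) w) (fun g => g w) fun t => rfl).symm
      _ = ∑ t : ZMod m, (σg ^ (t.val)) w := by
          refine Finset.sum_congr rfl fun t _ => by rw [hσt]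
      _ = ∑ i : Fin m, (σg ^ ((i : Fin m) : ℕ)) w := by
          refine (Fintype.sum_equiv
            (⟨fun i => ((i : ℕ) : ZMod m), fun t => ⟨t.val, ZMod.val_lt t⟩,
              fun i => Fin.ext (ZMod.val_cast_of_lt i.isLt),
              fun t => ZMod.natCast_rightInverse t⟩ : Fin m ≃ ZMod m)
            (fun i => (σg ^ ((i : Fin m) : ℕ)) w)
            (fun t => (σg ^ t.val) w) fun i => ?_).symm
          simp only [Equiv.coe_fn_mk, ZMod.val_cast_of_lt i.isLt]
      _ = ∑ i ∈ Finset.range m, (σg ^ i) w :=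
          Fin.sum_univ_eq_sum_range (fun n => (σg ^ n) w) m
  have hTpsum : ∑ g : E ≃ₐ[k] E, g (T (p : ℕ))
      = (p : ℕ) • algebraMap k E (δ β * β⁻¹) := by
    simp only [hTdef, map_sum]
    rw [Finset.sum_comm]
    have h1 : ∀ i : ℕ, ∑ g : E ≃ₐ[k] E, g ((σg ^ i) w) = algebraMap k E (δ β * β⁻¹) := by
      intro i
      rw [← hS]
      exact Fintype.sum_equiv (Equiv.mulRight (σg ^ i)) (fun g => g ((σg ^ i) w))
        (fun g => g w) fun x => rfl
    rw [Finset.sum_congr rfl fun i _ => h1 i, Finset.sum_const, Finset.card_range]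
  -- the logarithmic derivative of the norm
  have hkey : algebraMap k E (δ N)
      = algebraMap k E (-(((p : ℕ) : k) * (δ β * β⁻¹) * N)) := by
    calc algebraMap k E (δ N) = D (algebraMap k E N) := (hDk N).symm
      _ = D (∏ g : E ≃ₐ[k] E, g (Y p)) := by rw [hNprod]
      _ = ∑ g : E ≃ₐ[k] E, D (g (Y p)) * ∏ g' ∈ Finset.univ.erase g, g' (Y p) :=
          SD10.dprod D hDadd hDmul _ _
      _ = ∑ g : E ≃ₐ[k] E, (-(g (T (p : ℕ)))) * ∏ g' : E ≃ₐ[k] E, g' (Y p) := by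
          refine Finset.sum_congr rfl fun g _ => ?_
          rw [hDg, hDYp, map_neg, map_mul, ← Finset.mul_prod_erase Finset.univ
            (fun g' : E ≃ₐ[k] E => g' (Y p)) (Finset.mem_univ g)]
          ring
      _ = algebraMap k E (-(((p : ℕ) : k) * (δ β * β⁻¹) * N)) := by
          rw [← Finset.sum_mul, Finset.sum_neg_distrib, hTpsum, ← hNprod]
          simp only [nsmul_eq_mul, map_neg, map_mul, map_natCast]
          ring
  have hδN : δ N = -(((p : ℕ) : k) * (δ β * β⁻¹) * N) := hkEinj hkey
  -- conclusion
  have hδβp : δ (β ^ (p : ℕ)) = (p : ℕ) • (β ^ ((p : ℕ) - 1) * δ β) := by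
    have h1 := SD10.dpow δ hδa hδm β ((p : ℕ) - 1)
    rwa [(by omega : (p : ℕ) - 1 + 1 = (p : ℕ))] at h1
  have hconstβ : δ (N * β ^ (p : ℕ)) = 0 := by
    rw [hδm, hδβp, hδN, nsmul_eq_mul]
    have hppow : β ^ (p : ℕ) = β ^ ((p : ℕ) - 1) * β := by
      rw [← pow_succ]
      congr 1
      omega
    rw [hppow]
    field_simp
    ring
  have hx0 : N * β ^ (p : ℕ) ≠ 0 := mul_ne_zero hN0 (pow_ne_zero _ hβ)
  have hδxinv : δ (N * β ^ (p : ℕ))⁻¹ = 0 := by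
    have h1 : δ ((N * β ^ (p : ℕ)) * (N * β ^ (p : ℕ))⁻¹) = 0 := by
      rw [mul_inv_cancel₀ hx0, hδ1]
    rw [hδm, hconstβ, zero_mul, add_zero] at h1
    rcases mul_eq_zero.mp h1 with h2 | h2
    · exact absurd h2 hx0
    · exact h2
  refine ⟨(N * β ^ (p : ℕ))⁻¹, inv_ne_zero hx0, hδxinv, (Y p)⁻¹, ?_⟩
  have hnγinv : Algebra.norm k (Y p)⁻¹ = N⁻¹ := by
    have h1 : N * Algebra.norm k (Y p)⁻¹ = 1 := by
      rw [hNdef, ← map_mul, mul_inv_cancel₀ hγ0, map_one]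
    have h2 : N * Algebra.norm k (Y p)⁻¹ = N * N⁻¹ := by
      rw [h1, mul_inv_cancel₀ hN0]
    exact mul_left_cancel₀ hN0 h2
  rw [hnγinv]
  field_simp
end

section
/- Let k be a field of characteristic 0 with a derivation δ, let E/k be a finite Galois field extension, and let δ_E be the (unique) derivation on E extending δ. Then for every nonzero γ ∈ E, δ(N_{E/k}(γ)) = N_{E/k}(γ) · Tr_{E/k}(δ_E(γ)/γ), where N_{E/k} and Tr_{E/k} denote the field norm and trace of E over k. -/
section Aux

variable {k E : Type*} [Field k] [CharZero k] [Field E] [Algebra k E]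
    [FiniteDimensional k E] [IsGalois k E]

lemma aux_derivation_zero (D : Derivation k E E) : D = 0 := by
  ext x
  have hsep : (minpoly k x).Separable := Algebra.IsSeparable.isSeparable k x
  have h := D.comp_aeval_eq x (minpoly k x)
  rw [minpoly.aeval, map_zero] at h
  have hne : (Polynomial.aeval x) (Polynomial.derivative (minpoly k x)) ≠ 0 :=
    hsep.aeval_derivative_ne_zero (minpoly.aeval k x)
  have h0 : (Polynomial.aeval x) (Polynomial.derivative (minpoly k x)) * D x = 0 := by
    simpa [smul_eq_mul] using h.symm
  simpa [mul_eq_zero, hne] using h0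

variable (δ : k → k) (δE : E → E)
    (hEa : ∀ x y : E, δE (x + y) = δE x + δE y)
    (hEm : ∀ x y : E, δE (x * y) = x * δE y + δE x * y)
    (hext : ∀ c : k, δE (algebraMap k E c) = algebraMap k E (δ c))

include hEa hEm hext in
lemma aux_comm (σ : E ≃ₐ[k] E) (x : E) : δE (σ x) = σ (δE x) := by
  have hE1 : δE 1 = 0 := by
    have h1 : δE 1 = δE 1 + δE 1 := by simpa using hEm 1 1
    exact (right_eq_add.mp h1)
  have hcomp1 : (σ.symm : E → E) (δE (σ 1)) = 0 := by simp [hE1]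
  -- the difference derivation
  set D : E → E := fun x => σ.symm (δE (σ x)) - δE x with hD
  have hDconst : ∀ c : k, D (algebraMap k E c) = 0 := by
    intro c
    simp only [hD]
    rw [show σ (algebraMap k E c) = algebraMap k E c from σ.commutes c, hext]
    simp
  have hDadd : ∀ x y, D (x + y) = D x + D y := by
    intro x y
    simp only [hD, map_add, hEa]
    ring
  have hDmul : ∀ x y, D (x * y) = x * D y + D x * y := by
    intro x y
    simp only [hD, map_mul, hEm, map_add, AlgEquiv.symm_apply_apply]
    ring
  have hDsmul : ∀ (c : k) (x : E), D (c • x) = c • D x := by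
    intro c x
    rw [Algebra.smul_def, hDmul, hDconst, Algebra.smul_def]
    ring
  let D' : Derivation k E E :=
    { toFun := D
      map_add' := hDadd
      map_smul' := by intro c x; simpa using hDsmul c x
      map_one_eq_zero' := by
        have := hDconst 1
        simpa using this
      leibniz' := by
        intro a b
        simp only [smul_eq_mul, LinearMap.coe_mk, AddHom.coe_mk]
        rw [hDmul a b]; ring }
  have h0 : D' = 0 := aux_derivation_zero D'
  have : D x = 0 := by
    have := congrArg (fun f => f x) (congrArg (fun d => (d : Derivation k E E).toFun) h0)
    simpa [D'] using this
  have : σ.symm (δE (σ x)) = δE x := by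
    simpa [hD, sub_eq_zero] using this
  calc δE (σ x) = σ (σ.symm (δE (σ x))) := by simp
    _ = σ (δE x) := by rw [this]

include hEa hEm in
lemma aux_logderiv_prod {ι : Type*} (s : Finset ι) (f : ι → E) (hf : ∀ i ∈ s, f i ≠ 0) :
    δE (∏ i ∈ s, f i) = (∏ i ∈ s, f i) * ∑ i ∈ s, δE (f i) / f i := by
  classical
  induction s using Finset.induction_on with
  | empty =>
    have hE1 : δE 1 = 0 := by
      have h1 : δE 1 = δE 1 + δE 1 := by simpa using hEm 1 1
      exact (right_eq_add.mp h1)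
    simp [hE1]
  | insert _ _ hx ih =>
    rename_i a s
    rw [Finset.prod_insert hx, Finset.sum_insert hx, hEm,
      ih (fun i hi => hf i (Finset.mem_insert_of_mem hi))]
    have ha : f a ≠ 0 := hf a (Finset.mem_insert_self a s)
    field_simp
    ring

end Aux

/-- For a finite Galois extension `E/k` in characteristic `0` with
compatible derivations `δ` on `k` and `δ_E` on `E`, and any nonzero `γ ∈ E`,
`δ(N_{E/k}(γ)) = N_{E/k}(γ) · Tr_{E/k}(δ_E(γ)/γ)`. -/
theorem derivation_norm_eq_norm_mul_trace
    {k E : Type*} [Field k] [CharZero k] [Field E] [Algebra k E]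
    [FiniteDimensional k E] [IsGalois k E]
    (δ : k → k)
    (hδa : ∀ x y : k, δ (x + y) = δ x + δ y)
    (hδm : ∀ x y : k, δ (x * y) = x * δ y + δ x * y)
    (δE : E → E)
    (hEa : ∀ x y : E, δE (x + y) = δE x + δE y)
    (hEm : ∀ x y : E, δE (x * y) = x * δE y + δE x * y)
    (hext : ∀ c : k, δE (algebraMap k E c) = algebraMap k E (δ c))
    (γ : E) (hγ : γ ≠ 0) :
    δ (Algebra.norm k γ) = Algebra.norm k γ * Algebra.trace k E (δE γ / γ) := by
  apply (algebraMap k E).injective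
  have hσγ : ∀ σ : E ≃ₐ[k] E, σ γ ≠ 0 := fun σ h => hγ (by simpa using congrArg σ.symm h)
  calc algebraMap k E (δ (Algebra.norm k γ))
      = δE (algebraMap k E (Algebra.norm k γ)) := (hext _).symm
    _ = δE (∏ σ : E ≃ₐ[k] E, σ γ) := by rw [Algebra.norm_eq_prod_automorphisms]
    _ = (∏ σ : E ≃ₐ[k] E, σ γ) * ∑ σ : E ≃ₐ[k] E, δE (σ γ) / σ γ :=
        aux_logderiv_prod δE hEa hEm _ _ (fun σ _ => hσγ σ)
    _ = (algebraMap k E (Algebra.norm k γ)) *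
        ∑ σ : E ≃ₐ[k] E, σ (δE γ / γ) := by
        rw [Algebra.norm_eq_prod_automorphisms]
        congr 1
        refine Finset.sum_congr rfl fun σ _ => ?_
        rw [aux_comm δ δE hEa hEm hext σ γ, map_div₀]
    _ = algebraMap k E (Algebra.norm k γ * Algebra.trace k E (δE γ / γ)) := by
        rw [map_mul, trace_eq_sum_automorphisms]
end

section
/- Let (k,δ) be a differential field, let A = (α,β)_{k,ω} be a symbol algebra of degree m with generators u, v, and let d_s be the standard derivation on A. Then there exists an element a ∈ A with d_s(a) = 0 which is not of the form c·1 for any c ∈ k (i.e. the constants of (A,d_s) strictly contain the constants of (k,δ)) if and only if there exist i, j ∈ {0, …, m−1} with (i,j) ≠ (0,0), an element c ∈ k with δ(c) = 0, and a nonzero x ∈ k such that α^i·β^j·c·x^m = 1 (i.e. α^{−i}β^{−j} lies in C_{k,δ}·(k^×)^m). -/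
/-- The constants of `(A, dₛ)` strictly contain the constants of `(k, δ)`
iff `α^{−i}β^{−j} ∈ C_{k,δ}·(k^×)^m` for some `(i,j) ≠ (0,0)` with `0 ≤ i,j ≤ m−1`. -/
theorem symbolAlgebra_standardDerivation_new_constants_iff
    {k : Type*} [Field k] {m : ℕ} (hm : 2 ≤ m) (hchar : (m : k) ≠ 0)
    {ω : k} (hω : IsPrimitiveRoot ω m)
    {α β : k} (hα : α ≠ 0) (hβ : β ≠ 0)
    {A : Type*} [Ring A] [Algebra k A]
    (u v : A)
    (hu : u ^ m = algebraMap k A α)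
    (hv : v ^ m = algebraMap k A β)
    (hvu : v * u = ω • (u * v))
    (b : Module.Basis (Fin m × Fin m) k A)
    (hb : ∀ p : Fin m × Fin m, b p = u ^ (p.1 : ℕ) * v ^ (p.2 : ℕ))
    (δ : k → k)
    (hδa : ∀ x y : k, δ (x + y) = δ x + δ y)
    (hδm : ∀ x y : k, δ (x * y) = x * δ y + δ x * y)
    (ds : A → A)
    (hdsa : ∀ x y : A, ds (x + y) = ds x + ds y)
    (hdsm : ∀ x y : A, ds (x * y) = x * ds y + ds x * y)
    (hdsk : ∀ c : k, ds (algebraMap k A c) = algebraMap k A (δ c))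
    (hdsu : ds u = (δ α / ((m : k) * α)) • u)
    (hdsv : ds v = (δ β / ((m : k) * β)) • v) :
    (∃ a : A, ds a = 0 ∧ ∀ c : k, a ≠ algebraMap k A c) ↔
    (∃ i j : Fin m, ((i : ℕ) ≠ 0 ∨ (j : ℕ) ≠ 0) ∧
      ∃ c x : k, δ c = 0 ∧ x ≠ 0 ∧ α ^ (i : ℕ) * β ^ (j : ℕ) * c * x ^ m = 1) := by
  haveI : NeZero m := ⟨by omega⟩
  set cα := δ α / ((m : k) * α) with hcα
  set cβ := δ β / ((m : k) * β) with hcβ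
  -- basic facts about δ
  have hδ1 : δ 1 = 0 := by
    have h : δ 1 = δ 1 + δ 1 := by simpa using hδm 1 1
    exact left_eq_add.mp h
  have hδinv : ∀ c : k, c ≠ 0 → δ c = 0 → δ c⁻¹ = 0 := by
    intro c hc h0
    have h := hδm c c⁻¹
    rw [mul_inv_cancel₀ hc, hδ1, h0, zero_mul, add_zero] at h
    rcases mul_eq_zero.mp h.symm with h' | h'
    · exact absurd h' hc
    · exact h'
  have hδpow : ∀ (y : k), y ≠ 0 → ∀ n : ℕ, δ (y ^ n) = (n : k) * y ^ n / y * δ y := by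
    intro y hy n
    induction n with
    | zero => simp [hδ1]
    | succ n ih =>
      rw [pow_succ, hδm, ih]
      push_cast
      field_simp
      ring
  -- the key equivalence over k
  have key : ∀ (i j : ℕ) (x : k), x ≠ 0 →
      ((δ x + x * ((i : k) * cα + (j : k) * cβ) = 0) ↔
        δ (α ^ i * β ^ j * x ^ m) = 0) := by
    intro i j x hx
    have h1 : δ (α ^ i * β ^ j * x ^ m)
        = (α ^ i * β ^ j * x ^ m * (m : k) / x) *
          (δ x + x * ((i : k) * cα + (j : k) * cβ)) := by
      rw [hδm, hδm, hδpow α hα, hδpow β hβ, hδpow x hx, hcα, hcβ]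
      field_simp
      ring
    rw [h1]
    have hfac : α ^ i * β ^ j * x ^ m * (m : k) / x ≠ 0 := by
      apply div_ne_zero _ hx
      exact mul_ne_zero (mul_ne_zero (mul_ne_zero (pow_ne_zero _ hα)
        (pow_ne_zero _ hβ)) (pow_ne_zero _ hx)) hchar
    constructor
    · intro h; rw [h, mul_zero]
    · intro h
      exact (mul_eq_zero.mp h).resolve_left hfac
  -- facts about ds
  have hds1 : ds 1 = 0 := by
    have h := hdsk 1
    rw [map_one, hδ1, map_zero] at h
    exact h
  have hdssmul : ∀ (c : k) (y : A), ds (c • y) = c • ds y + (δ c) • y := by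
    intro c y
    rw [Algebra.smul_def, hdsm, hdsk, ← Algebra.smul_def, ← Algebra.smul_def]
  have hdsupow : ∀ n : ℕ, ds (u ^ n) = ((n : k) * cα) • u ^ n := by
    intro n
    induction n with
    | zero => simpa using hds1
    | succ n ih =>
      rw [pow_succ, hdsm, hdsu, ih, mul_smul_comm, smul_mul_assoc, ← pow_succ, ← add_smul]
      congr 1
      push_cast
      ring
  have hdsvpow : ∀ n : ℕ, ds (v ^ n) = ((n : k) * cβ) • v ^ n := by
    intro n
    induction n with
    | zero => simpa using hds1
    | succ n ih =>
      rw [pow_succ, hdsm, hdsv, ih, mul_smul_comm, smul_mul_assoc, ← pow_succ, ← add_smul]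
      congr 1
      push_cast
      ring
  have hdsb : ∀ p : Fin m × Fin m,
      ds (b p) = (((p.1 : ℕ) : k) * cα + ((p.2 : ℕ) : k) * cβ) • b p := by
    intro p
    rw [hb p, hdsm, hdsupow, hdsvpow, mul_smul_comm, smul_mul_assoc, add_smul]
    exact add_comm _ _
  have hb1 : b ((0 : Fin m), (0 : Fin m)) = 1 := by
    rw [hb]
    simp
  constructor
  · rintro ⟨a, hda, hne⟩
    have hrepr : ∑ p : Fin m × Fin m, b.repr a p • b p = a := b.sum_repr a
    have hsum : ds a = ∑ p : Fin m × Fin m,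
        (δ (b.repr a p) + b.repr a p * (((p.1 : ℕ) : k) * cα + ((p.2 : ℕ) : k) * cβ)) • b p := by
      have hds_sum : ds (∑ p : Fin m × Fin m, b.repr a p • b p)
          = ∑ p : Fin m × Fin m, ds (b.repr a p • b p) :=
        map_sum (AddMonoidHom.mk' ds hdsa) _ _
      rw [hrepr] at hds_sum
      calc ds a = ∑ p : Fin m × Fin m, ds (b.repr a p • b p) := hds_sum
        _ = _ := by
            refine Finset.sum_congr rfl fun p _ => ?_
            rw [hdssmul, hdsb, smul_smul, add_smul]
            exact add_comm _ _
    have hcoef : ∀ p : Fin m × Fin m,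
        δ (b.repr a p) + b.repr a p * (((p.1 : ℕ) : k) * cα + ((p.2 : ℕ) : k) * cβ) = 0 := by
      intro p
      have h0 : ∑ p : Fin m × Fin m,
          (δ (b.repr a p) + b.repr a p * (((p.1 : ℕ) : k) * cα + ((p.2 : ℕ) : k) * cβ)) • b p
            = 0 := hsum.symm.trans hda
      have h1 := b.repr_sum_self
        (fun p => δ (b.repr a p) + b.repr a p * (((p.1 : ℕ) : k) * cα + ((p.2 : ℕ) : k) * cβ))
      rw [h0] at h1
      have h2 := congrFun h1 p
      simpa using h2.symm
    have hex : ∃ p : Fin m × Fin m, p ≠ ((0 : Fin m), (0 : Fin m)) ∧ b.repr a p ≠ 0 := by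
      by_contra h
      push_neg at h
      have ha : a = b.repr a ((0 : Fin m), (0 : Fin m)) • (1 : A) := by
        conv_lhs => rw [← hrepr]
        rw [Finset.sum_eq_single ((0 : Fin m), (0 : Fin m))]
        · rw [hb1]
        · intro q _ hq
          rw [h q hq, zero_smul]
        · intro h'
          exact absurd (Finset.mem_univ _) h'
      exact hne _ (ha.trans (Algebra.algebraMap_eq_smul_one _).symm)
    obtain ⟨p, hp0, hfp⟩ := hex
    have hij : (p.1 : ℕ) ≠ 0 ∨ (p.2 : ℕ) ≠ 0 := by
      by_contra h
      push_neg at h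
      apply hp0
      have h1 : p.1 = 0 := Fin.ext (by simp [h.1])
      have h2 : p.2 = 0 := Fin.ext (by simp [h.2])
      exact Prod.ext h1 h2
    have hconst : δ (α ^ (p.1 : ℕ) * β ^ (p.2 : ℕ) * b.repr a p ^ m) = 0 :=
      (key (p.1 : ℕ) (p.2 : ℕ) (b.repr a p) hfp).mp (hcoef p)
    have hc0ne : α ^ (p.1 : ℕ) * β ^ (p.2 : ℕ) * b.repr a p ^ m ≠ 0 :=
      mul_ne_zero (mul_ne_zero (pow_ne_zero _ hα) (pow_ne_zero _ hβ)) (pow_ne_zero _ hfp)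
    refine ⟨p.1, p.2, hij, (α ^ (p.1 : ℕ) * β ^ (p.2 : ℕ) * b.repr a p ^ m)⁻¹, b.repr a p,
      hδinv _ hc0ne hconst, hfp, ?_⟩
    field_simp
  · rintro ⟨i, j, hij, c, x, hc, hx, hcx⟩
    have hc0 : c ≠ 0 := by
      intro h
      rw [h] at hcx
      simp at hcx
    have hδprod : δ (α ^ (i : ℕ) * β ^ (j : ℕ) * x ^ m) = 0 := by
      have h1 : (α ^ (i : ℕ) * β ^ (j : ℕ) * x ^ m) * c = 1 := by
        rw [← hcx]; ring
      have h2 := hδm (α ^ (i : ℕ) * β ^ (j : ℕ) * x ^ m) c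
      rw [h1, hδ1, hc, mul_zero, zero_add] at h2
      exact (mul_eq_zero.mp h2.symm).resolve_right hc0
    have hkey : δ x + x * (((i : ℕ) : k) * cα + ((j : ℕ) : k) * cβ) = 0 :=
      (key (i : ℕ) (j : ℕ) x hx).mpr hδprod
    refine ⟨x • b (i, j), ?_, ?_⟩
    · rw [hdssmul, hdsb, smul_smul, ← add_smul]
      have hz : x * ((((i, j).1 : ℕ) : k) * cα + (((i, j).2 : ℕ) : k) * cβ) + δ x = 0 := by
        have : x * (((i : ℕ) : k) * cα + ((j : ℕ) : k) * cβ) + δ x = 0 := by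
          rw [add_comm]; exact hkey
        exact this
      rw [hz, zero_smul]
    · intro c' hc'
      have hne' : ((i, j) : Fin m × Fin m) ≠ ((0 : Fin m), (0 : Fin m)) := by
        intro he
        rw [Prod.mk.injEq] at he
        rcases hij with h | h
        · exact h (by rw [he.1]; simp)
        · exact h (by rw [he.2]; simp)
      have h1 : (b.repr (x • b (i, j))) (i, j) = x := by
        simp [Module.Basis.repr_self]
      rw [hc'] at h1
      have h2 : (b.repr (algebraMap k A c')) (i, j) = 0 := by
        rw [Algebra.algebraMap_eq_smul_one, ← hb1]
        rw [map_smul]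
        simp only [Module.Basis.repr_self, Finsupp.smul_apply, Finsupp.single_apply]
        rw [if_neg (by exact fun h => hne' h.symm)]
        exact smul_zero c'
      exact hx ((h2.symm.trans h1).symm)
end

section
/- Let K be a field of characteristic 0, let m ≥ 2 be an integer, and let ω ∈ K be a primitive m-th root of unity. Then for every integer r with 0 ≤ r ≤ m−1, the sum Σ_{i=1}^{m−1} 1/(ω^{r·i}·(1 − ω^i)), computed in K, equals (m−1)/2 − r, i.e. equals ((m − 1) − 2r)·2^{−1} as an element of K. -/
lemma geom_aux {K : Type*} [Field K] {m : ℕ} (hm : 2 ≤ m) {x : K}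
    (hxm : x ^ m = 1) (hx1 : x ≠ 1) :
    ∑ i ∈ Finset.Ico 1 m, x ^ i = -1 := by
  have h := geom_sum_eq hx1 m
  rw [hxm, sub_self, zero_div, Finset.range_eq_Ico,
    Finset.sum_eq_sum_Ico_succ_bot (by omega : 0 < m)] at h
  simp at h; linear_combination h

lemma S0_aux {K : Type*} [Field K] [CharZero K] {m : ℕ} (hm : 2 ≤ m)
    {ω : K} (hω : IsPrimitiveRoot ω m) :
    ∑ i ∈ Finset.Ico 1 m, 1 / (1 - ω ^ i) = ((m : K) - 1) / 2 := by
  have hω0 : ω ≠ 0 := hω.ne_zero (by omega)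
  have hne1 : ∀ i ∈ Finset.Ico 1 m, ω ^ i ≠ 1 := by
    intro i hi h
    rw [Finset.mem_Ico] at hi
    rw [hω.pow_eq_one_iff_dvd] at h
    have := Nat.le_of_dvd (by omega) h
    omega
  set S := ∑ i ∈ Finset.Ico 1 m, 1 / (1 - ω ^ i) with hS
  have hrefl : ∑ i ∈ Finset.Ico 1 m, 1 / (1 - ω ^ (m - i)) = S := by
    refine Finset.sum_nbij' (fun i => m - i) (fun i => m - i) ?_ ?_ ?_ ?_ ?_
    · intro a ha; simp only [Finset.mem_Ico] at *; omega
    · intro a ha; simp only [Finset.mem_Ico] at *; omega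
    · intro a ha; simp only [Finset.mem_Ico] at ha; omega
    · intro a ha; simp only [Finset.mem_Ico] at ha; omega
    · intro a ha; rfl
  have key : S + S = (m : K) - 1 := by
    nth_rewrite 2 [← hrefl]
    rw [← Finset.sum_add_distrib]
    have heach : ∀ i ∈ Finset.Ico 1 m, (1 / (1 - ω ^ i) + 1 / (1 - ω ^ (m - i))) = 1 := by
      intro i hi
      have hi' := Finset.mem_Ico.mp hi
      have hmul : ω ^ i * ω ^ (m - i) = 1 := by
        rw [← pow_add]
        have h : i + (m - i) = m := by omega
        rw [h, hω.pow_eq_one]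
      have h1 : (1 : K) - ω ^ i ≠ 0 := by
        intro h; exact hne1 i hi (by linear_combination -h)
      have h2 : (1 : K) - ω ^ (m - i) ≠ 0 := by
        intro h
        have hb : ω ^ (m - i) = 1 := by linear_combination -h
        rw [hb, mul_one] at hmul
        exact hne1 i hi hmul
      field_simp
      linear_combination -hmul
    rw [Finset.sum_congr rfl heach, Finset.sum_const, Nat.card_Ico, nsmul_eq_mul, mul_one,
      Nat.cast_sub (by omega), Nat.cast_one]
  have h2 : (2 : K) ≠ 0 := two_ne_zero
  field_simp
  linear_combination key

/-- For a primitive `m`-th root of unity `ω` in a field `K` of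
characteristic `0` and `0 ≤ r ≤ m−1`,
`Σ_{i=1}^{m−1} 1/(ω^{r·i}(1 − ω^i)) = (m−1)/2 − r`. -/
theorem sum_inv_rootOfUnity_eq
    {K : Type*} [Field K] [CharZero K] {m : ℕ} (hm : 2 ≤ m)
    {ω : K} (hω : IsPrimitiveRoot ω m)
    (r : ℕ) (hr : r ≤ m - 1) :
    ∑ i ∈ Finset.Ico 1 m, 1 / (ω ^ (r * i) * (1 - ω ^ i))
      = (((m : K) - 1) - 2 * (r : K)) / 2 := by
  have hω0 : ω ≠ 0 := hω.ne_zero (by omega)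
  induction r with
  | zero => simpa using S0_aux hm hω
  | succ r ih =>
    have hr' : r ≤ m - 1 := by omega
    have ihr := ih hr'
    have step : ∀ i ∈ Finset.Ico 1 m,
        1 / (ω ^ ((r+1) * i) * (1 - ω ^ i))
          = 1 / (ω ^ (r * i) * (1 - ω ^ i)) + ((ω ^ (r+1))⁻¹) ^ i := by
      intro i hi
      rw [Finset.mem_Ico] at hi
      have ha0 : ω ^ i ≠ 0 := pow_ne_zero _ hω0
      have ha1 : (1:K) - ω ^ i ≠ 0 := by
        intro h
        have h1 : ω ^ i = 1 := by linear_combination -h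
        rw [hω.pow_eq_one_iff_dvd] at h1
        have := Nat.le_of_dvd (by omega) h1
        omega
      have e1 : ω ^ ((r+1) * i) = (ω ^ i) ^ (r+1) := by rw [← pow_mul, Nat.mul_comm]
      have e2 : ω ^ (r * i) = (ω ^ i) ^ r := by rw [← pow_mul, Nat.mul_comm]
      have e3 : ((ω ^ (r+1))⁻¹) ^ i = ((ω ^ i) ^ (r+1))⁻¹ := by
        rw [← inv_pow, ← pow_mul, inv_pow, ← pow_mul, Nat.mul_comm]
      rw [e1, e2, e3]
      have hb0 : (ω ^ i) ^ (r+1) ≠ 0 := pow_ne_zero _ ha0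
      have hc0 : (ω ^ i) ^ r ≠ 0 := pow_ne_zero _ ha0
      field_simp
      ring
    rw [Finset.sum_congr rfl step, Finset.sum_add_distrib, ihr]
    have hx1 : (ω ^ (r+1))⁻¹ ≠ 1 := by
      rw [ne_eq, inv_eq_one, hω.pow_eq_one_iff_dvd]
      intro hd
      have := Nat.le_of_dvd (by omega) hd
      omega
    have hxm : ((ω ^ (r+1))⁻¹) ^ m = 1 := by
      rw [inv_pow, ← pow_mul, Nat.mul_comm, pow_mul, hω.pow_eq_one, one_pow, inv_one]
    rw [geom_aux hm hxm hx1]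
    push_cast
    ring
end

section
/- Let k be a field of characteristic 0 equipped with the zero derivation, and let A = (α,β)_{k,ω} be a symbol algebra of degree m which is a division algebra (every nonzero element of A is invertible). Let d be a nonzero derivation on A with d(c·1) = 0 for all c ∈ k. Then for every field extension E of k which is algebraic over k and every derivation δ_E on E with δ_E(c) = 0 for all c ∈ k, there is NO E-algebra isomorphism ψ : E ⊗_k A → M_m(E) such that for all e ∈ E and a ∈ A, applying δ_E to each entry of ψ(e ⊗ a) yields ψ(δ_E(e) ⊗ a + e ⊗ d(a)). In other words, (A,d) is not split by any algebraic differential field extension of (k,0). -/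
open scoped TensorProduct

/-- Let `k` be a field of characteristic `0` with the zero derivation and
`A = (α,β)_{k,ω}` a symbol algebra that is a division algebra, with a nonzero derivation `d`
vanishing on `k`. Then no algebraic differential field extension `(E, δ_E)` of `(k, 0)`
splits the differential algebra `(A, d)`. -/
theorem symbolAlgebra_division_not_split_by_algebraic_extension
    {k : Type*} [Field k] [CharZero k] {m : ℕ} (hm : 2 ≤ m)
    {ω : k} (hω : IsPrimitiveRoot ω m)
    {α β : k} (hα : α ≠ 0) (hβ : β ≠ 0)
    {A : Type*} [Ring A] [Algebra k A]
    (u v : A)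
    (hu : u ^ m = algebraMap k A α)
    (hv : v ^ m = algebraMap k A β)
    (hvu : v * u = ω • (u * v))
    (b : Module.Basis (Fin m × Fin m) k A)
    (hb : ∀ p : Fin m × Fin m, b p = u ^ (p.1 : ℕ) * v ^ (p.2 : ℕ))
    (hdiv : ∀ a : A, a ≠ 0 → IsUnit a)
    (d : A → A)
    (hda : ∀ x y : A, d (x + y) = d x + d y)
    (hdm : ∀ x y : A, d (x * y) = x * d y + d x * y)
    (hdk : ∀ c : k, d (algebraMap k A c) = 0)
    (hdne : ∃ a : A, d a ≠ 0)
    (E : Type*) [Field E] [Algebra k E]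
    (halg : Algebra.IsAlgebraic k E)
    (δE : E → E)
    (hEa : ∀ x y : E, δE (x + y) = δE x + δE y)
    (hEm : ∀ x y : E, δE (x * y) = x * δE y + δE x * y)
    (hEk : ∀ c : k, δE (algebraMap k E c) = 0) :
    ¬ ∃ ψ : (E ⊗[k] A) ≃ₐ[E] Matrix (Fin m) (Fin m) E,
        ∀ (e : E) (a : A),
          (ψ (e ⊗ₜ[k] a)).map δE = ψ (δE e ⊗ₜ[k] a + e ⊗ₜ[k] d a) := by
  rintro ⟨ψ, hψ⟩
  -- Step 1: package `δE` as a derivation over `k`.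
  have hδ1 : δE 1 = 0 := by
    have h := hEm 1 1
    rw [one_mul, one_mul, mul_one] at h
    have h2 : δE 1 + δE 1 = δE 1 + 0 := by rw [add_zero]; exact h.symm
    exact add_left_cancel h2
  have hδsmul : ∀ (c : k) (x : E), δE (c • x) = c • δE x := by
    intro c x
    rw [Algebra.smul_def, hEm, hEk, zero_mul, add_zero, ← Algebra.smul_def]
  let D : Derivation k E E :=
    { toFun := δE
      map_add' := hEa
      map_smul' := hδsmul
      map_one_eq_zero' := hδ1
      leibniz' := fun x y => by
        show δE (x * y) = x * δE y + y * δE x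
        rw [hEm, mul_comm y (δE x)] }
  -- Step 2: every derivation on an algebraic extension in char 0 is zero.
  haveI : Algebra.IsSeparable k E := inferInstance
  have hδzero : ∀ x : E, δE x = 0 := by
    intro x
    have hsep : (minpoly k x).Separable := Algebra.IsSeparable.isSeparable k x
    have h0 : D (Polynomial.aeval x (minpoly k x)) = 0 := by
      rw [minpoly.aeval]; exact D.map_zero
    rw [Derivation.map_aeval] at h0
    have hne : Polynomial.aeval x (Polynomial.derivative (minpoly k x)) ≠ 0 :=
      hsep.aeval_derivative_ne_zero (minpoly.aeval k x)
    have : D x = 0 := by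
      rcases smul_eq_zero.mp h0 with h | h
      · exact absurd h hne
      · exact h
    exact this
  -- Step 3: derive a contradiction.
  obtain ⟨a, ha⟩ := hdne
  have h := hψ 1 a
  rw [hδ1, TensorProduct.zero_tmul, zero_add] at h
  have hLHS : (ψ ((1 : E) ⊗ₜ[k] a)).map δE = 0 := by
    ext i j
    simp [Matrix.map_apply, hδzero]
  rw [hLHS] at h
  have h2 : (1 : E) ⊗ₜ[k] d a = 0 := by
    apply ψ.injective
    rw [map_zero, ← h]
  -- injectivity of `a ↦ 1 ⊗ a` via the base-changed basis
  have h3 : ∀ p, b.repr (d a) p = 0 := by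
    intro p
    have := congrArg (fun z => (b.baseChange E).repr z p) h2
    simp only [Module.Basis.baseChange_repr_tmul, map_zero, Finsupp.coe_zero, Pi.zero_apply] at this
    have : (algebraMap k E) (b.repr (d a) p) = 0 := by
      rwa [Algebra.smul_def, mul_one] at this
    exact (algebraMap k E).injective (by rwa [map_zero])
  apply ha
  have : d a = b.repr.symm (b.repr (d a)) := (b.repr.symm_apply_apply _).symm
  rw [this]
  have : b.repr (d a) = 0 := Finsupp.ext h3
  rw [this, map_zero]
end
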